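/- arXiv:2210.14937 — 3 statements merged into one kernel-verified Lean document; each statement's English description precedes it below -/
import Mathlib

section
/- Let N ≥ 2, m, ħ, ω₀ > 0, c₀ ≠ 0 and λ ∈ ℝ. Let b : ℝ → (0,∞) be twice differentiable and Ω : ℝ → ℝ satisfy b̈(t) + Ω(t)²b(t) = ω₀²/b(t)³ for all t, let τ : ℝ → ℝ be differentiable, and set c(t) := c₀/b(t). Define Ψ(t,x) := b(t)^{−N/2} ∏_{i<j} |sinh( c(t) x_{ij} )|^{λ} · exp( − mω₀ ∑_k x_k²/(2ħ b(t)²) + i m ḃ(t) ∑_k x_k²/(2ħ b(t)) + i N τ(t) ). Then there exists a function E : ℝ → ℝ (depending only on time) such that for every t and every x with pairwise distinct coordinates, iħ ∂_t Ψ(t,x) = − (ħ²/2m) ∑_i ∂²_{x_i} Ψ(t,x) + [ (1/2) m Ω(t)² ∑_i x_i² + (ħ² λ(λ−1) c(t)²/m) ∑_{i<j} 1/sinh²( c(t) x_{ij} ) − ħ λ (ω₀/b(t)²) c(t) ∑_{i<j} coth( c(t) x_{ij} ) · x_{ij} + E(t) ] Ψ(t,x). -/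
open Finset

/-- The real hyperbolic cotangent. -/
noncomputable def coth (u : ℝ) : ℝ := Real.cosh u / Real.sinh u

lemma sinh_ne {u : ℝ} (h : u ≠ 0) : Real.sinh u ≠ 0 := by
  simpa [Real.sinh_eq_zero] using h

lemma coth_neg (u : ℝ) : coth (-u) = - coth u := by
  simp [coth, neg_div, div_neg]

lemma coth_sq {u : ℝ} (h : u ≠ 0) :
    coth u ^ 2 = 1 + 1 / Real.sinh u ^ 2 := by
  have hs := sinh_ne h
  have hc := Real.cosh_sq u
  rw [coth, div_pow, hc, add_div, div_self (pow_ne_zero 2 hs), add_comm]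

lemma hasDerivAt_coth {u : ℝ} (h : u ≠ 0) :
    HasDerivAt coth (-(1 / Real.sinh u ^ 2)) u := by
  have h1 : HasDerivAt Real.sinh (Real.cosh u) u := Real.hasDerivAt_sinh u
  have h2 : HasDerivAt Real.cosh (Real.sinh u) u := Real.hasDerivAt_cosh u
  have := h2.div h1 (sinh_ne h)
  refine this.congr_deriv ?_
  have hc := Real.cosh_sq u
  have hs := sinh_ne h
  have e : Real.sinh u * Real.sinh u - Real.cosh u * Real.cosh u = -1 := by nlinarith [hc]
  rw [e, neg_div]

lemma hasDerivAt_logsinh {u : ℝ} (h : u ≠ 0) :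
    HasDerivAt (fun v => Real.log (Real.sinh v)) (coth u) u := by
  have := (Real.hasDerivAt_log (sinh_ne h)).comp u (Real.hasDerivAt_sinh u)
  refine this.congr_deriv ?_
  rw [coth]
  ring

lemma coth_add_identity {a b : ℝ} (ha : a ≠ 0) (hb : b ≠ 0) (hab : a + b ≠ 0) :
    coth a * coth (a+b) + coth b * coth (a+b) - coth a * coth b = 1 := by
  have sa := sinh_ne ha
  have sb := sinh_ne hb
  have sab := sinh_ne hab
  have sab' : Real.sinh a * Real.cosh b + Real.cosh a * Real.sinh b ≠ 0 := by
    rw [← Real.sinh_add]; exact sab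
  simp only [coth, Real.sinh_add, Real.cosh_add]
  field_simp
  ring

lemma erase_eq_union {N : ℕ} (i : Fin N) : (univ : Finset (Fin N)).erase i
    = univ.filter (fun j => i < j) ∪ univ.filter (fun j => j < i) := by
  ext j
  simp only [Finset.mem_erase, Finset.mem_filter, Finset.mem_union, Finset.mem_univ,
    and_true, true_and]
  constructor
  · intro h
    rcases lt_or_gt_of_ne h with h' | h'
    · exact Or.inr h'
    · exact Or.inl h'
  · rintro (h | h)
    · exact ne_of_gt h
    · exact ne_of_lt h

lemma filter_disj {N : ℕ} (i : Fin N) :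
    Disjoint ((univ : Finset (Fin N)).filter (fun j => i < j))
      (univ.filter (fun j => j < i)) := by
  simp only [Finset.disjoint_filter]
  intro j _ h1 h2
  exact absurd (h1.trans h2) (lt_irrefl i)

lemma sum_erase_split {N : ℕ} (g : Fin N → Fin N → ℝ) :
    ∑ i, ∑ j ∈ univ.erase i, g i j
      = ∑ i, ∑ j ∈ univ.filter (fun j => i < j), (g i j + g j i) := by
  calc ∑ i, ∑ j ∈ univ.erase i, g i j
      = ∑ i, (∑ j ∈ univ.filter (fun j => i < j), g i j
            + ∑ j ∈ univ.filter (fun j => j < i), g i j) := by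
        refine Finset.sum_congr rfl fun i _ => ?_
        rw [erase_eq_union i, Finset.sum_union (filter_disj i)]
    _ = ∑ i, ∑ j ∈ univ.filter (fun j => i < j), g i j
        + ∑ i, ∑ j ∈ univ.filter (fun j => j < i), g i j := Finset.sum_add_distrib
    _ = ∑ i, ∑ j ∈ univ.filter (fun j => i < j), g i j
        + ∑ j, ∑ i ∈ univ.filter (fun i => j < i), g i j := by
        rw [Finset.sum_comm' (s := univ) (t := fun i => univ.filter (fun j => j < i))
          (t' := univ) (s' := fun j => univ.filter (fun i => j < i))]
        intro i j
        simp [and_comm]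
    _ = ∑ i, ∑ j ∈ univ.filter (fun j => i < j), (g i j + g j i) := by
        rw [← Finset.sum_add_distrib]
        refine Finset.sum_congr rfl fun i _ => ?_
        rw [← Finset.sum_add_distrib]

lemma pair_sum_row_col {N : ℕ} (i : Fin N) (A : Fin N → ℝ) :
    ∑ r, ∑ s ∈ univ.filter (fun s => r < s), (if r = i then A s else if s = i then A r else 0)
      = ∑ j ∈ univ.erase i, A j := by
  have hinner : ∀ r : Fin N, r ≠ i →
      (∑ s ∈ univ.filter (fun s => r < s),
        (if r = i then A s else if s = i then A r else 0)) = if r < i then A r else 0 := by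
    intro r hr
    simp only [if_neg hr]
    rw [Finset.sum_ite_eq' (univ.filter (fun s => r < s)) i (fun _ => A r)]
    simp [Finset.mem_filter]
  rw [← Finset.add_sum_erase _ _ (Finset.mem_univ i)]
  rw [Finset.sum_congr rfl (fun r hr => hinner r (Finset.mem_erase.mp hr).1)]
  simp only [if_pos rfl]
  rw [← Finset.sum_filter]
  have e1 : (univ.erase i).filter (fun r => r < i) = univ.filter (fun r => r < i) := by
    ext r
    simp only [Finset.mem_filter, Finset.mem_erase, Finset.mem_univ, and_true, true_and]
    constructor
    · rintro ⟨_, h⟩; exact h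
    · intro h; exact ⟨ne_of_lt h, h⟩
  rw [e1, erase_eq_union i, Finset.sum_union (filter_disj i)]
  simp

def tripSet (N : ℕ) : Finset (Fin N × Fin N × Fin N) :=
  univ.filter (fun p => p.1 ≠ p.2.1 ∧ p.1 ≠ p.2.2 ∧ p.2.1 ≠ p.2.2)

lemma nested_eq_trip {N : ℕ} (g : Fin N → Fin N → Fin N → ℝ) :
    ∑ i, ∑ j ∈ univ.erase i, ∑ k ∈ (univ.erase i).erase j, g i j k
      = ∑ p ∈ tripSet N, g p.1 p.2.1 p.2.2 := by
  rw [tripSet, Finset.sum_filter, Fintype.sum_prod_type]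
  refine Finset.sum_congr rfl fun i _ => ?_
  rw [Fintype.sum_prod_type]
  have e1 : (univ : Finset (Fin N)).erase i = univ.filter (fun j => j ≠ i) :=
    (Finset.filter_ne' univ i).symm
  have e2 : ∀ j : Fin N, ((univ : Finset (Fin N)).erase i).erase j
      = univ.filter (fun k => k ≠ j ∧ k ≠ i) := by
    intro j; ext k; simp [and_comm]
  simp only [e2]
  rw [e1, Finset.sum_filter]
  refine Finset.sum_congr rfl fun j _ => ?_
  by_cases hji : j = i
  · simp [hji]
  · rw [if_pos hji, Finset.sum_filter]
    refine Finset.sum_congr rfl fun k _ => ?_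
    by_cases h1 : k = j <;> by_cases h2 : k = i <;>
      simp_all [eq_comm, Ne, not_false_iff]

lemma trip_cyc {N : ℕ} (F : Fin N → Fin N → Fin N → ℝ) :
    ∑ p ∈ tripSet N, F p.1 p.2.1 p.2.2 = ∑ p ∈ tripSet N, F p.2.1 p.2.2 p.1 := by
  refine Finset.sum_nbij' (i := fun p => (p.2.2, p.1, p.2.1))
    (j := fun p => (p.2.1, p.2.2, p.1)) ?_ ?_ ?_ ?_ ?_
  · rintro ⟨a, b, c⟩ hp
    simp only [tripSet, Finset.mem_filter, Finset.mem_univ, true_and] at hp ⊢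
    exact ⟨hp.2.1.symm, hp.2.2.symm, hp.1⟩
  · rintro ⟨a, b, c⟩ hp
    simp only [tripSet, Finset.mem_filter, Finset.mem_univ, true_and] at hp ⊢
    exact ⟨hp.2.2, hp.1.symm, hp.2.1.symm⟩
  · rintro ⟨a, b, c⟩ _; rfl
  · rintro ⟨a, b, c⟩ _; rfl
  · rintro ⟨a, b, c⟩ _; rfl

lemma trip_cross {N : ℕ} (f : Fin N → Fin N → ℝ)
    (hid : ∀ i j k, i ≠ j → i ≠ k → j ≠ k →
        f i j * f i k + f j k * f j i + f k i * f k j = 1) :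
    3 * ∑ p ∈ tripSet N, f p.1 p.2.1 * f p.1 p.2.2 = ((tripSet N).card : ℝ) := by
  have h1 : ∑ p ∈ tripSet N, f p.1 p.2.1 * f p.1 p.2.2
      = ∑ p ∈ tripSet N, f p.2.1 p.2.2 * f p.2.1 p.1 :=
    trip_cyc (fun i j k => f i j * f i k)
  have h2 : ∑ p ∈ tripSet N, f p.2.1 p.2.2 * f p.2.1 p.1
      = ∑ p ∈ tripSet N, f p.2.2 p.1 * f p.2.2 p.2.1 :=
    trip_cyc (fun i j k => f j k * f j i)
  have h3 : 3 * ∑ p ∈ tripSet N, f p.1 p.2.1 * f p.1 p.2.2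
      = ∑ p ∈ tripSet N, (f p.1 p.2.1 * f p.1 p.2.2
          + f p.2.1 p.2.2 * f p.2.1 p.1 + f p.2.2 p.1 * f p.2.2 p.2.1) := by
    rw [Finset.sum_add_distrib, Finset.sum_add_distrib, ← h1, ← h1.trans h2]; ring
  rw [h3]
  rw [Finset.sum_congr rfl (fun p hp => ?_), Finset.sum_const, nsmul_eq_mul, mul_one]
  · simp only [tripSet, Finset.mem_filter] at hp
    exact hid p.1 p.2.1 p.2.2 hp.2.1 hp.2.2.1 hp.2.2.2

noncomputable def GG (N : ℕ) (m hbar ω₀ lam : ℝ) (b τ c : ℝ → ℝ)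
    (s : ℝ) (y : Fin N → ℝ) : ℂ :=
  (((-(N : ℝ)/2) * Real.log (b s)
    + lam * ∑ i : Fin N, ∑ j ∈ univ.filter (fun j => i < j),
        Real.log (Real.sinh (c s * (y i - y j)))
    - m * ω₀ * (∑ k, (y k)^2) / (2 * hbar * (b s)^2) : ℝ) : ℂ)
  + Complex.I * ((m * deriv b s * (∑ k, (y k)^2) / (2 * hbar * b s) : ℝ) : ℂ)
  + Complex.I * (N : ℂ) * ((τ s : ℝ) : ℂ)

lemma psi_eq_exp {N : ℕ} {m hbar ω₀ lam : ℝ} {b τ c : ℝ → ℝ}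
    (hbpos : ∀ t, 0 < b t) (hcne : ∀ t, c t ≠ 0)
    {Ψ : ℝ → (Fin N → ℝ) → ℂ}
    (hΨ : ∀ t x, Ψ t x =
      (((b t) ^ (-(N : ℝ) / 2)
        * (∏ i : Fin N, ∏ j ∈ univ.filter (fun j => i < j),
            |Real.sinh (c t * (x i - x j))| ^ lam)
        * Real.exp (- m * ω₀ * (∑ k, (x k) ^ 2) / (2 * hbar * (b t) ^ 2)) : ℝ) : ℂ)
      * Complex.exp (
          Complex.I * ((m * deriv b t * (∑ k, (x k) ^ 2) / (2 * hbar * b t) : ℝ) : ℂ)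
          + Complex.I * (N : ℂ) * (τ t : ℂ)))
    (s : ℝ) (y : Fin N → ℝ) (hy : ∀ i j : Fin N, i ≠ j → y i ≠ y j) :
    Ψ s y = Complex.exp (GG N m hbar ω₀ lam b τ c s y) := by
  rw [hΨ]
  have h1 : (b s) ^ (-(N:ℝ)/2) = Real.exp ((-(N:ℝ)/2) * Real.log (b s)) := by
    rw [Real.rpow_def_of_pos (hbpos s), mul_comm]
  have h3 : (∏ i : Fin N, ∏ j ∈ univ.filter (fun j => i < j),
        |Real.sinh (c s * (y i - y j))| ^ lam)
      = Real.exp (∑ i : Fin N, ∑ j ∈ univ.filter (fun j => i < j),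
          lam * Real.log (Real.sinh (c s * (y i - y j)))) := by
    rw [Real.exp_sum]
    refine Finset.prod_congr rfl fun i _ => ?_
    rw [Real.exp_sum]
    refine Finset.prod_congr rfl fun j hj => ?_
    have hij : i ≠ j := ne_of_lt (Finset.mem_filter.mp hj).2
    have hz : Real.sinh (c s * (y i - y j)) ≠ 0 :=
      sinh_ne (mul_ne_zero (hcne s) (sub_ne_zero.mpr (hy i j hij)))
    rw [Real.rpow_def_of_pos (abs_pos.mpr hz), Real.log_abs, mul_comm]
  rw [h1, h3, ← Real.exp_add, ← Real.exp_add, Complex.ofReal_exp, ← Complex.exp_add]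
  rw [GG]
  congr 1
  have h4 : lam * ∑ i : Fin N, ∑ j ∈ univ.filter (fun j => i < j),
      Real.log (Real.sinh (c s * (y i - y j)))
      = ∑ i : Fin N, ∑ j ∈ univ.filter (fun j => i < j),
          lam * Real.log (Real.sinh (c s * (y i - y j))) := by
    rw [Finset.mul_sum]
    exact Finset.sum_congr rfl fun i _ => Finset.mul_sum _ _ _
  push_cast [h4]
  ring

lemma hasDerivAt_GG_time {N : ℕ} {m hbar ω₀ lam c₀ : ℝ} {b τ c : ℝ → ℝ}
    (hbpos : ∀ t, 0 < b t) (hb : Differentiable ℝ b) (hb' : Differentiable ℝ (deriv b))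
    (hτ : Differentiable ℝ τ) (hc : ∀ t, c t = c₀ / b t) (hc₀ : c₀ ≠ 0)
    (hhbar : hbar ≠ 0)
    (t : ℝ) (x : Fin N → ℝ) (hx : ∀ i j : Fin N, i ≠ j → x i ≠ x j) :
    HasDerivAt (fun s => GG N m hbar ω₀ lam b τ c s x)
      ( (((-(N : ℝ)/2) * (deriv b t / b t)
          + lam * ∑ i : Fin N, ∑ j ∈ univ.filter (fun j => i < j),
              coth (c t * (x i - x j)) * ((-(c₀ * deriv b t) / (b t)^2) * (x i - x j))
          + m * ω₀ * (∑ k, (x k)^2) * deriv b t / (hbar * (b t)^3) : ℝ) : ℂ)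
        + Complex.I * ((m * (deriv (deriv b) t * b t - (deriv b t)^2) * (∑ k, (x k)^2)
            / (2 * hbar * (b t)^2) : ℝ) : ℂ)
        + Complex.I * (N : ℂ) * ((deriv τ t : ℝ) : ℂ) ) t := by
  have hb0 : b t ≠ 0 := (hbpos t).ne'
  have hct0 : c t ≠ 0 := by rw [hc]; exact div_ne_zero hc₀ hb0
  have hA : HasDerivAt (fun s => (-(N:ℝ)/2) * Real.log (b s))
      ((-(N:ℝ)/2) * (deriv b t / b t)) t :=
    (((hb t).hasDerivAt).log hb0).const_mul _
  have hcd : HasDerivAt c (-(c₀ * deriv b t) / (b t)^2) t := by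
    have h0 : c = fun s => c₀ / b s := funext hc
    rw [h0]
    exact ((hasDerivAt_const t c₀).div ((hb t).hasDerivAt) hb0).congr_deriv (by
      field_simp; ring)
  have hpair : ∀ i j : Fin N, i ≠ j →
      HasDerivAt (fun s => Real.log (Real.sinh (c s * (x i - x j))))
        (coth (c t * (x i - x j)) * ((-(c₀ * deriv b t) / (b t)^2) * (x i - x j))) t :=
    fun i j hij =>
      by have := (hasDerivAt_logsinh (mul_ne_zero hct0 (sub_ne_zero.mpr (hx i j hij)))).comp t
          (hcd.mul_const (x i - x j)); exact this
  have hB : HasDerivAt (fun s => lam * ∑ i : Fin N, ∑ j ∈ univ.filter (fun j => i < j),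
        Real.log (Real.sinh (c s * (x i - x j))))
      (lam * ∑ i : Fin N, ∑ j ∈ univ.filter (fun j => i < j),
        coth (c t * (x i - x j)) * ((-(c₀ * deriv b t) / (b t)^2) * (x i - x j))) t :=
    (HasDerivAt.fun_sum (fun i _ => HasDerivAt.fun_sum (u := univ.filter (fun j => i < j))
      (fun j hj => hpair i j (ne_of_lt (Finset.mem_filter.mp hj).2)))).const_mul lam
  have hC : HasDerivAt (fun s => m * ω₀ * (∑ k, (x k)^2) / (2 * hbar * (b s)^2))
      (-(m * ω₀ * (∑ k, (x k)^2) * deriv b t / (hbar * (b t)^3))) t := by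
    have hden : HasDerivAt (fun s => 2 * hbar * (b s)^2)
        (2 * hbar * (2 * b t * deriv b t)) t :=
      (((hb t).hasDerivAt.pow 2).const_mul (2*hbar)).congr_deriv (by push_cast; ring)
    have hden0 : 2 * hbar * (b t)^2 ≠ 0 :=
      mul_ne_zero (mul_ne_zero two_ne_zero hhbar) (pow_ne_zero 2 hb0)
    exact ((hasDerivAt_const t (m * ω₀ * (∑ k, (x k)^2))).div hden hden0).congr_deriv (by
      field_simp; ring)
  have hY : HasDerivAt (fun s => m * deriv b s * (∑ k, (x k)^2) / (2 * hbar * b s))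
      (m * (deriv (deriv b) t * b t - (deriv b t)^2) * (∑ k, (x k)^2)
        / (2 * hbar * (b t)^2)) t := by
    have hnum : HasDerivAt (fun s => m * deriv b s * (∑ k, (x k)^2))
        (m * deriv (deriv b) t * (∑ k, (x k)^2)) t :=
      (((hb' t).hasDerivAt).const_mul m).mul_const _
    have hden : HasDerivAt (fun s => 2 * hbar * b s) (2 * hbar * deriv b t) t :=
      ((hb t).hasDerivAt).const_mul _
    have hden0 : 2 * hbar * b t ≠ 0 := by
      simp [hhbar, hb0]
    exact (hnum.div hden hden0).congr_deriv (by field_simp)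
  have hT : HasDerivAt (fun s => Complex.I * (N : ℂ) * ((τ s : ℝ) : ℂ))
      (Complex.I * (N : ℂ) * ((deriv τ t : ℝ) : ℂ)) t :=
    (((hτ t).hasDerivAt).ofReal_comp).const_mul _
  simp only [GG]
  exact ((((hA.add hB).sub hC).ofReal_comp.add
    ((hY.ofReal_comp).const_mul Complex.I)).add hT).congr_deriv (by push_cast; ring)

lemma sum_update_sq {N : ℕ} (x : Fin N → ℝ) (i : Fin N) (z : ℝ) :
    (∑ k, (Function.update x i z k)^2) = z^2 + ∑ k ∈ univ.erase i, (x k)^2 := by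
  rw [← Finset.add_sum_erase _ _ (Finset.mem_univ i)]
  congr 1
  · rw [Function.update_self]
  · exact Finset.sum_congr rfl fun k hk => by
      rw [Function.update_of_ne (Finset.mem_erase.mp hk).1]

lemma hasDerivAt_GG_space {N : ℕ} {m hbar ω₀ lam : ℝ} {b τ c : ℝ → ℝ} {t' : ℝ}
    (hb0 : b t' ≠ 0) (hct0 : c t' ≠ 0) (hhbar : hbar ≠ 0)
    (x : Fin N → ℝ) (i : Fin N) (y : ℝ) (hyU : ∀ j, j ≠ i → y ≠ x j) :
    HasDerivAt (fun z => GG N m hbar ω₀ lam b τ c t' (Function.update x i z))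
      ( ((lam * (c t' * ∑ j ∈ univ.erase i, coth (c t' * (y - x j)))
          - m * ω₀ * y / (hbar * (b t')^2) : ℝ) : ℂ)
        + Complex.I * ((m * deriv b t' * y / (hbar * b t') : ℝ) : ℂ) ) y := by
  have hfun2 : (fun z => GG N m hbar ω₀ lam b τ c t' (Function.update x i z)) = fun z =>
      (((-(N : ℝ)/2) * Real.log (b t')
        + lam * ∑ i' : Fin N, ∑ j' ∈ univ.filter (fun j' => i' < j'),
            Real.log (Real.sinh (c t' * (Function.update x i z i' - Function.update x i z j')))
        - m * ω₀ * (z^2 + ∑ k ∈ univ.erase i, (x k)^2) / (2 * hbar * (b t')^2) : ℝ) : ℂ)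
      + Complex.I * ((m * deriv b t' * (z^2 + ∑ k ∈ univ.erase i, (x k)^2)
          / (2 * hbar * b t') : ℝ) : ℂ)
      + Complex.I * (N : ℂ) * ((τ t' : ℝ) : ℂ) := by
    funext z
    rw [GG, sum_update_sq x i z]
  rw [hfun2]
  have hpair : ∀ i' j' : Fin N, i' < j' →
      HasDerivAt (fun z => Real.log (Real.sinh
          (c t' * (Function.update x i z i' - Function.update x i z j'))))
        (if i' = i then c t' * coth (c t' * (y - x j'))
         else if j' = i then c t' * coth (c t' * (y - x i')) else 0) y := by
    intro i' j' hij
    by_cases h1 : i' = i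
    · subst h1
      have hne : j' ≠ i' := (ne_of_lt hij).symm
      have hfun : (fun z => Real.log (Real.sinh
          (c t' * (Function.update x i' z i' - Function.update x i' z j'))))
          = fun z => Real.log (Real.sinh (c t' * (z - x j'))) := by
        funext z; rw [Function.update_self, Function.update_of_ne hne]
      rw [hfun, if_pos rfl]
      have harg : c t' * (y - x j') ≠ 0 :=
        mul_ne_zero hct0 (sub_ne_zero.mpr (hyU j' hne))
      have := (hasDerivAt_logsinh harg).comp y
        (((hasDerivAt_id y).sub_const (x j')).const_mul (c t'))
      exact this.congr_deriv (by ring)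
    · by_cases h2 : j' = i
      · subst h2
        rw [if_neg h1, if_pos rfl]
        have hfun : (fun z => Real.log (Real.sinh
            (c t' * (Function.update x j' z i' - Function.update x j' z j'))))
            = fun z => Real.log (Real.sinh (c t' * (x i' - z))) := by
          funext z; rw [Function.update_self, Function.update_of_ne h1]
        rw [hfun]
        have harg : c t' * (x i' - y) ≠ 0 :=
          mul_ne_zero hct0 (sub_ne_zero.mpr (Ne.symm (hyU i' h1)))
        have hinner : HasDerivAt (fun z : ℝ => c t' * (x i' - z)) (c t' * (0 - 1)) y :=
          ((hasDerivAt_const y (x i')).sub (hasDerivAt_id y)).const_mul (c t')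
        refine ((hasDerivAt_logsinh harg).comp y hinner).congr_deriv ?_
        rw [show c t' * (x i' - y) = -(c t' * (y - x i')) by ring, coth_neg]
        ring
      · rw [if_neg h1, if_neg h2]
        have hfun : (fun z => Real.log (Real.sinh
            (c t' * (Function.update x i z i' - Function.update x i z j'))))
            = fun _ => Real.log (Real.sinh (c t' * (x i' - x j'))) := by
          funext z; rw [Function.update_of_ne h1, Function.update_of_ne h2]
        rw [hfun]
        exact hasDerivAt_const y _
  have hB : HasDerivAt (fun z => lam * ∑ i' : Fin N, ∑ j' ∈ univ.filter (fun j' => i' < j'),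
        Real.log (Real.sinh (c t' * (Function.update x i z i' - Function.update x i z j'))))
      (lam * (c t' * ∑ j ∈ univ.erase i, coth (c t' * (y - x j)))) y := by
    have := (HasDerivAt.fun_sum (u := (univ : Finset (Fin N)))
      (fun i' _ => HasDerivAt.fun_sum (u := univ.filter (fun j' => i' < j'))
        (fun j' hj' => hpair i' j' (Finset.mem_filter.mp hj').2))).const_mul lam
    refine this.congr_deriv ?_
    rw [pair_sum_row_col i (fun j => c t' * coth (c t' * (y - x j)))]
    simp only [Finset.mul_sum]
  have hA0 : HasDerivAt (fun _ : ℝ => (-(N : ℝ)/2) * Real.log (b t')) 0 y :=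
    hasDerivAt_const y _
  have hC : HasDerivAt (fun z => m * ω₀ * (z^2 + ∑ k ∈ univ.erase i, (x k)^2)
        / (2 * hbar * (b t')^2)) (m * ω₀ * y / (hbar * (b t')^2)) y := by
    have := (((hasDerivAt_pow 2 y).add_const (∑ k ∈ univ.erase i, (x k)^2)).const_mul
      (m * ω₀)).div_const (2 * hbar * (b t')^2)
    refine this.congr_deriv ?_
    have h2 : (2:ℝ) * hbar * (b t')^2 ≠ 0 :=
      mul_ne_zero (mul_ne_zero two_ne_zero hhbar) (pow_ne_zero 2 hb0)
    field_simp
    ring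
  have hY : HasDerivAt (fun z => m * deriv b t' * (z^2 + ∑ k ∈ univ.erase i, (x k)^2)
        / (2 * hbar * b t')) (m * deriv b t' * y / (hbar * b t')) y := by
    have := (((hasDerivAt_pow 2 y).add_const (∑ k ∈ univ.erase i, (x k)^2)).const_mul
      (m * deriv b t')).div_const (2 * hbar * b t')
    refine this.congr_deriv ?_
    have h2 : (2:ℝ) * hbar * b t' ≠ 0 := mul_ne_zero (mul_ne_zero two_ne_zero hhbar) hb0
    field_simp
    ring
  have hT : HasDerivAt (fun _ : ℝ => Complex.I * (N : ℂ) * ((τ t' : ℝ) : ℂ)) 0 y :=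
    hasDerivAt_const y _
  exact ((((hA0.add hB).sub hC).ofReal_comp.add
    ((hY.ofReal_comp).const_mul Complex.I)).add hT).congr_deriv (by push_cast; ring)

lemma hasDerivAt_D1 {N : ℕ} (m hbar ω₀ lam bt b1 ct : ℝ)
    (x : Fin N → ℝ) (i : Fin N) (hct0 : ct ≠ 0)
    (hx : ∀ j, j ≠ i → x i ≠ x j) :
    HasDerivAt (fun y => (((lam * (ct * ∑ j ∈ univ.erase i, coth (ct * (y - x j)))
          - m * ω₀ * y / (hbar * bt^2) : ℝ) : ℂ)
        + Complex.I * ((m * b1 * y / (hbar * bt) : ℝ) : ℂ)))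
      ( ((-(lam * ct^2 * ∑ j ∈ univ.erase i, 1 / Real.sinh (ct * (x i - x j))^2)
          - m * ω₀ / (hbar * bt^2) : ℝ) : ℂ)
        + Complex.I * ((m * b1 / (hbar * bt) : ℝ) : ℂ) ) (x i) := by
  have hsum : HasDerivAt (fun y => ∑ j ∈ univ.erase i, coth (ct * (y - x j)))
      (∑ j ∈ univ.erase i, (-(1 / Real.sinh (ct * (x i - x j))^2) * (ct * 1))) (x i) := by
    refine HasDerivAt.fun_sum (fun j hj => ?_)
    have harg : ct * (x i - x j) ≠ 0 :=
      mul_ne_zero hct0 (sub_ne_zero.mpr (hx j (Finset.mem_erase.mp hj).1))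
    exact (hasDerivAt_coth harg).comp (x i)
      (((hasDerivAt_id (x i)).sub_const (x j)).const_mul ct)
  have hre : HasDerivAt (fun y => lam * (ct * ∑ j ∈ univ.erase i, coth (ct * (y - x j)))
      - m * ω₀ * y / (hbar * bt^2))
      (lam * (ct * ∑ j ∈ univ.erase i, (-(1 / Real.sinh (ct * (x i - x j))^2) * (ct * 1)))
        - m * ω₀ * 1 / (hbar * bt^2)) (x i) :=
    ((hsum.const_mul ct).const_mul lam).sub
      (((hasDerivAt_id (x i)).const_mul (m * ω₀)).div_const (hbar * bt^2))
  have him : HasDerivAt (fun y : ℝ => m * b1 * y / (hbar * bt))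
      (m * b1 * 1 / (hbar * bt)) (x i) :=
    ((hasDerivAt_id (x i)).const_mul (m * b1)).div_const (hbar * bt)
  refine ((hre.ofReal_comp).add ((him.ofReal_comp).const_mul Complex.I)).congr_deriv ?_
  have e : lam * (ct * ∑ j ∈ univ.erase i, (-(1 / Real.sinh (ct * (x i - x j))^2) * (ct * 1)))
      = -(lam * ct^2 * ∑ j ∈ univ.erase i, 1 / Real.sinh (ct * (x i - x j))^2) := by
    simp only [Finset.mul_sum, neg_mul, ← Finset.sum_neg_distrib]
    exact Finset.sum_congr rfl fun j _ => by ring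
  rw [e]
  push_cast
  ring


set_option maxHeartbeats 3200000 in
/-- Exact dynamics of the time-dependent generalized hyperbolic model: with `c(t) = c₀/b(t)`
and `b` solving the Ermakov equation, the ansatz
`Ψ(t,x) = b^{−N/2} ∏_{i<j}|sinh(c x_{ij})|^λ
exp(−mω₀∑x_k²/(2ħb²) + imḃ∑x_k²/(2ħb) + iNτ)` solves the Schrödinger equation with the
harmonic trap of frequency `Ω(t)`, the `1/sinh²` two-body interaction, the long-range
`coth·x` term, and some time-dependent constant `E(t)`. -/
theorem stmt_13 (N : ℕ) (hN : 2 ≤ N) (m hbar ω₀ : ℝ)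
    (hm : 0 < m) (hhbar : 0 < hbar) (hω₀ : 0 < ω₀)
    (c₀ : ℝ) (hc₀ : c₀ ≠ 0) (lam : ℝ)
    (b : ℝ → ℝ) (hbpos : ∀ t, 0 < b t)
    (hb : Differentiable ℝ b) (hb' : Differentiable ℝ (deriv b))
    (Ω : ℝ → ℝ)
    (hErmakov : ∀ t, deriv (deriv b) t + (Ω t) ^ 2 * b t = ω₀ ^ 2 / (b t) ^ 3)
    (τ : ℝ → ℝ) (hτ : Differentiable ℝ τ)
    (c : ℝ → ℝ) (hc : ∀ t, c t = c₀ / b t)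
    (Ψ : ℝ → (Fin N → ℝ) → ℂ)
    (hΨ : ∀ t x, Ψ t x =
      (((b t) ^ (-(N : ℝ) / 2)
        * (∏ i : Fin N, ∏ j ∈ univ.filter (fun j => i < j),
            |Real.sinh (c t * (x i - x j))| ^ lam)
        * Real.exp (- m * ω₀ * (∑ k, (x k) ^ 2) / (2 * hbar * (b t) ^ 2)) : ℝ) : ℂ)
      * Complex.exp (
          Complex.I * ((m * deriv b t * (∑ k, (x k) ^ 2) / (2 * hbar * b t) : ℝ) : ℂ)
          + Complex.I * (N : ℂ) * (τ t : ℂ))) :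
    ∃ E : ℝ → ℝ,
      ∀ (t : ℝ) (x : Fin N → ℝ), (∀ i j : Fin N, i ≠ j → x i ≠ x j) →
        Complex.I * (hbar : ℂ) * deriv (fun s => Ψ s x) t
          = - ((hbar : ℂ) ^ 2 / (2 * (m : ℂ)))
              * ∑ i : Fin N, iteratedDeriv 2 (fun y => Ψ t (Function.update x i y)) (x i)
            + (((1 / 2) * m * (Ω t) ^ 2 * ∑ i, (x i) ^ 2
                + (hbar ^ 2 * lam * (lam - 1) * (c t) ^ 2 / m)
                  * ∑ i : Fin N, ∑ j ∈ univ.filter (fun j => i < j),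
                      1 / (Real.sinh (c t * (x i - x j))) ^ 2
                - hbar * lam * (ω₀ / (b t) ^ 2) * c t
                  * ∑ i : Fin N, ∑ j ∈ univ.filter (fun j => i < j),
                      coth (c t * (x i - x j)) * (x i - x j)
                + E t : ℝ) : ℂ) * Ψ t x := by
  have hb0 : ∀ s, b s ≠ 0 := fun s => (hbpos s).ne'
  have hcne : ∀ s, c s ≠ 0 := fun s => by rw [hc]; exact div_ne_zero hc₀ (hb0 s)
  have hh0 : hbar ≠ 0 := hhbar.ne'
  have hm0 : m ≠ 0 := hm.ne'
  refine ⟨fun s => -hbar * N * deriv τ s - hbar * N * ω₀ / (2 * (b s)^2)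
      + (hbar^2 * lam^2 * (c s)^2 / (2*m)) * ((∑ i : Fin N, ((univ.erase i).card : ℝ))
        + ((tripSet N).card : ℝ)/3), fun t x hx => ?_⟩
  simp only []
  have hargne : ∀ i j : Fin N, i ≠ j → c t * (x i - x j) ≠ 0 :=
    fun i j hij => mul_ne_zero (hcne t) (sub_ne_zero.mpr (hx i j hij))
  -- time derivative
  have hdt : deriv (fun s => Ψ s x) t
      = ( (((-(N : ℝ)/2) * (deriv b t / b t)
          + lam * ∑ i : Fin N, ∑ j ∈ univ.filter (fun j => i < j),
              coth (c t * (x i - x j)) * ((-(c₀ * deriv b t) / (b t)^2) * (x i - x j))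
          + m * ω₀ * (∑ k, (x k)^2) * deriv b t / (hbar * (b t)^3) : ℝ) : ℂ)
        + Complex.I * ((m * (deriv (deriv b) t * b t - (deriv b t)^2) * (∑ k, (x k)^2)
            / (2 * hbar * (b t)^2) : ℝ) : ℂ)
        + Complex.I * (N : ℂ) * ((deriv τ t : ℝ) : ℂ) ) * Ψ t x := by
    have hfeq : (fun s => Ψ s x) = fun s => Complex.exp (GG N m hbar ω₀ lam b τ c s x) :=
      funext (fun s => psi_eq_exp hbpos hcne hΨ s x hx)
    rw [hfeq, ((hasDerivAt_GG_time hbpos hb hb' hτ hc hc₀ hh0 t x hx).cexp).deriv,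
      ← psi_eq_exp hbpos hcne hΨ t x hx]
    ring
  -- spatial second derivatives
  have hiter : ∀ i : Fin N, iteratedDeriv 2 (fun y => Ψ t (Function.update x i y)) (x i)
      = ( ( ((-(lam * (c t)^2 * ∑ j ∈ univ.erase i, 1 / Real.sinh (c t * (x i - x j))^2)
              - m * ω₀ / (hbar * (b t)^2) : ℝ) : ℂ)
          + Complex.I * ((m * deriv b t / (hbar * b t) : ℝ) : ℂ) )
        + ( ((lam * (c t * ∑ j ∈ univ.erase i, coth (c t * (x i - x j)))
              - m * ω₀ * x i / (hbar * (b t)^2) : ℝ) : ℂ)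
          + Complex.I * ((m * deriv b t * x i / (hbar * b t) : ℝ) : ℂ) )^2 ) * Ψ t x := by
    intro i
    have hxiU' : ∀ j, j ≠ i → x i ≠ x j := fun j hj => hx i j (Ne.symm hj)
    set U : Set ℝ := (↑((univ.erase i).image x))ᶜ with hUdef
    have hUopen : IsOpen U := (Finset.finite_toSet _).isClosed.isOpen_compl
    have hmemU : ∀ y : ℝ, y ∈ U ↔ ∀ j, j ≠ i → y ≠ x j := by
      intro y
      simp only [hUdef, Set.mem_compl_iff, Finset.coe_image, Set.mem_image,
        Finset.mem_coe, Finset.mem_erase, Finset.mem_univ, and_true, not_exists, not_and]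
      constructor
      · intro h j hj hy
        exact h j hj hy.symm
      · intro h j hj hy
        exact h j hj hy.symm
    have hxiU : x i ∈ U := (hmemU _).mpr hxiU'
    have hupdDist : ∀ y ∈ U, ∀ a b' : Fin N, a ≠ b' →
        Function.update x i y a ≠ Function.update x i y b' := by
      intro y hy a b' hab
      have hyx := (hmemU y).mp hy
      by_cases ha : a = i
      · subst ha
        rw [Function.update_self, Function.update_of_ne (Ne.symm hab)]
        exact hyx b' (Ne.symm hab)
      · rw [Function.update_of_ne ha]
        by_cases hb2 : b' = i
        · subst hb2
          rw [Function.update_self]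
          exact fun hh => (hyx a ha) hh.symm
        · rw [Function.update_of_ne hb2]
          exact hx a b' hab
    have hfU : ∀ y ∈ U, Ψ t (Function.update x i y)
        = Complex.exp (GG N m hbar ω₀ lam b τ c t (Function.update x i y)) :=
      fun y hy => psi_eq_exp hbpos hcne hΨ t _ (hupdDist y hy)
    have hD1 : ∀ y ∈ U, HasDerivAt
        (fun z => GG N m hbar ω₀ lam b τ c t (Function.update x i z))
        ( ((lam * (c t * ∑ j ∈ univ.erase i, coth (c t * (y - x j)))
            - m * ω₀ * y / (hbar * (b t)^2) : ℝ) : ℂ)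
          + Complex.I * ((m * deriv b t * y / (hbar * b t) : ℝ) : ℂ) ) y :=
      fun y hy => hasDerivAt_GG_space (hb0 t) (hcne t) hh0 x i y ((hmemU y).mp hy)
    have hfd : ∀ y ∈ U, HasDerivAt (fun z => Ψ t (Function.update x i z))
        (Complex.exp (GG N m hbar ω₀ lam b τ c t (Function.update x i y))
          * ( ((lam * (c t * ∑ j ∈ univ.erase i, coth (c t * (y - x j)))
              - m * ω₀ * y / (hbar * (b t)^2) : ℝ) : ℂ)
            + Complex.I * ((m * deriv b t * y / (hbar * b t) : ℝ) : ℂ) )) y := by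
      intro y hy
      refine ((hD1 y hy).cexp).congr_of_eventuallyEq ?_
      filter_upwards [hUopen.mem_nhds hy] with z hz
      exact hfU z hz
    have hEv : deriv (fun z => Ψ t (Function.update x i z)) =ᶠ[nhds (x i)]
        (fun y => Complex.exp (GG N m hbar ω₀ lam b τ c t (Function.update x i y))
          * ( ((lam * (c t * ∑ j ∈ univ.erase i, coth (c t * (y - x j)))
              - m * ω₀ * y / (hbar * (b t)^2) : ℝ) : ℂ)
            + Complex.I * ((m * deriv b t * y / (hbar * b t) : ℝ) : ℂ) )) := by
      filter_upwards [hUopen.mem_nhds hxiU] with z hz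
      exact (hfd z hz).deriv
    have hprod := ((hD1 (x i) hxiU).cexp).mul
      (hasDerivAt_D1 m hbar ω₀ lam (b t) (deriv b t) (c t) x i (hcne t) hxiU')
    have h2 := hprod.congr_of_eventuallyEq hEv
    have hit2 : iteratedDeriv 2 (fun y => Ψ t (Function.update x i y))
        = deriv (deriv (fun y => Ψ t (Function.update x i y))) := by
      rw [iteratedDeriv_succ, iteratedDeriv_one]
    rw [hit2, h2.deriv, Function.update_eq_self i x,
      ← psi_eq_exp hbpos hcne hΨ t x hx]
    ring
  -- combinatorial identities
  have hXK : (∑ i : Fin N, x i * ∑ j ∈ univ.erase i, coth (c t * (x i - x j)))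
      = ∑ i : Fin N, ∑ j ∈ univ.filter (fun j => i < j),
          coth (c t * (x i - x j)) * (x i - x j) := by
    rw [Finset.sum_congr rfl (fun i _ => Finset.mul_sum
      (univ.erase i) (fun j => coth (c t * (x i - x j))) (x i))]
    rw [sum_erase_split (fun i j => x i * coth (c t * (x i - x j)))]
    refine Finset.sum_congr rfl fun i _ => Finset.sum_congr rfl fun j hj => ?_
    rw [show c t * (x j - x i) = -(c t * (x i - x j)) by ring, coth_neg]
    ring
  have hM2Q : (∑ i : Fin N, ∑ j ∈ univ.erase i, 1 / Real.sinh (c t * (x i - x j))^2)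
      = 2 * ∑ i : Fin N, ∑ j ∈ univ.filter (fun j => i < j),
          1 / Real.sinh (c t * (x i - x j))^2 := by
    rw [sum_erase_split (fun i j => 1 / Real.sinh (c t * (x i - x j))^2)]
    rw [Finset.mul_sum]
    refine Finset.sum_congr rfl fun i _ => ?_
    rw [Finset.mul_sum]
    refine Finset.sum_congr rfl fun j hj => ?_
    rw [show c t * (x j - x i) = -(c t * (x i - x j)) by ring, Real.sinh_neg]
    ring
  have hKsq : (∑ i : Fin N, (∑ j ∈ univ.erase i, coth (c t * (x i - x j)))^2)
      = (∑ i : Fin N, ∑ j ∈ univ.erase i, 1 / Real.sinh (c t * (x i - x j))^2)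
        + (∑ i : Fin N, ((univ.erase i).card : ℝ)) + ((tripSet N).card : ℝ)/3 := by
    have hid : ∀ i j k : Fin N, i ≠ j → i ≠ k → j ≠ k →
        coth (c t * (x i - x j)) * coth (c t * (x i - x k))
        + coth (c t * (x j - x k)) * coth (c t * (x j - x i))
        + coth (c t * (x k - x i)) * coth (c t * (x k - x j)) = 1 := by
      intro i j k hij hik hjk
      have ha : c t * (x i - x j) ≠ 0 := hargne i j hij
      have hb2 : c t * (x j - x k) ≠ 0 := hargne j k hjk
      have hab : c t * (x i - x j) + c t * (x j - x k) ≠ 0 := by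
        rw [show c t * (x i - x j) + c t * (x j - x k) = c t * (x i - x k) by ring]
        exact hargne i k hik
      have H := coth_add_identity ha hb2 hab
      rw [show c t * (x i - x j) + c t * (x j - x k) = c t * (x i - x k) by ring] at H
      rw [show c t * (x j - x i) = -(c t * (x i - x j)) by ring, coth_neg,
          show c t * (x k - x i) = -(c t * (x i - x k)) by ring, coth_neg,
          show c t * (x k - x j) = -(c t * (x j - x k)) by ring, coth_neg]
      linear_combination H
    have hcross := trip_cross (fun i j => coth (c t * (x i - x j))) hid
    have e1 : ∀ i : Fin N, (∑ j ∈ univ.erase i, coth (c t * (x i - x j)))^2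
        = ∑ j ∈ univ.erase i, coth (c t * (x i - x j))^2
          + ∑ j ∈ univ.erase i, ∑ k ∈ (univ.erase i).erase j,
              coth (c t * (x i - x j)) * coth (c t * (x i - x k)) := by
      intro i
      rw [sq, Finset.sum_mul_sum, ← Finset.sum_add_distrib]
      refine Finset.sum_congr rfl fun j hj => ?_
      rw [← Finset.add_sum_erase _ _ hj]
      congr 1
      exact (sq _).symm
    have e2 : ∀ i : Fin N, (∑ j ∈ univ.erase i, coth (c t * (x i - x j))^2)
        = (∑ j ∈ univ.erase i, 1 / Real.sinh (c t * (x i - x j))^2)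
          + ((univ.erase i).card : ℝ) := by
      intro i
      have hcs : ∀ j ∈ univ.erase i, coth (c t * (x i - x j))^2
          = 1 / Real.sinh (c t * (x i - x j))^2 + 1 := by
        intro j hj
        have := coth_sq (hargne i j (Ne.symm (Finset.mem_erase.mp hj).1))
        linarith
      rw [Finset.sum_congr rfl hcs, Finset.sum_add_distrib, Finset.sum_const,
        nsmul_eq_mul, mul_one]
    rw [Finset.sum_congr rfl (fun i _ => e1 i), Finset.sum_add_distrib,
      nested_eq_trip (fun i j k => coth (c t * (x i - x j)) * coth (c t * (x i - x k))),
      Finset.sum_congr rfl (fun i _ => e2 i), Finset.sum_add_distrib]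
    linarith [hcross]
  -- per-i complex sum reduction
  have hsumscalar : (∑ i : Fin N,
      ( ( ((-(lam * (c t)^2 * ∑ j ∈ univ.erase i, 1 / Real.sinh (c t * (x i - x j))^2)
              - m * ω₀ / (hbar * (b t)^2) : ℝ) : ℂ)
          + Complex.I * ((m * deriv b t / (hbar * b t) : ℝ) : ℂ) )
        + ( ((lam * (c t * ∑ j ∈ univ.erase i, coth (c t * (x i - x j)))
              - m * ω₀ * x i / (hbar * (b t)^2) : ℝ) : ℂ)
          + Complex.I * ((m * deriv b t * x i / (hbar * b t) : ℝ) : ℂ) )^2 ))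
      = ((∑ i : Fin N,
          ((-(lam * (c t)^2 * ∑ j ∈ univ.erase i, 1 / Real.sinh (c t * (x i - x j))^2)
            - m * ω₀ / (hbar * (b t)^2))
           + (lam * (c t * ∑ j ∈ univ.erase i, coth (c t * (x i - x j)))
              - m * ω₀ * x i / (hbar * (b t)^2))^2
           - (m * deriv b t * x i / (hbar * b t))^2) : ℝ) : ℂ)
        + ((∑ i : Fin N,
            ((m * deriv b t / (hbar * b t))
             + 2 * (lam * (c t * ∑ j ∈ univ.erase i, coth (c t * (x i - x j)))
                - m * ω₀ * x i / (hbar * (b t)^2)) * (m * deriv b t * x i / (hbar * b t))) : ℝ) : ℂ)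
          * Complex.I := by
    have hper : ∀ i : Fin N,
        ( ( ((-(lam * (c t)^2 * ∑ j ∈ univ.erase i, 1 / Real.sinh (c t * (x i - x j))^2)
              - m * ω₀ / (hbar * (b t)^2) : ℝ) : ℂ)
          + Complex.I * ((m * deriv b t / (hbar * b t) : ℝ) : ℂ) )
        + ( ((lam * (c t * ∑ j ∈ univ.erase i, coth (c t * (x i - x j)))
              - m * ω₀ * x i / (hbar * (b t)^2) : ℝ) : ℂ)
          + Complex.I * ((m * deriv b t * x i / (hbar * b t) : ℝ) : ℂ) )^2 )
        = (((-(lam * (c t)^2 * ∑ j ∈ univ.erase i, 1 / Real.sinh (c t * (x i - x j))^2)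
            - m * ω₀ / (hbar * (b t)^2))
           + (lam * (c t * ∑ j ∈ univ.erase i, coth (c t * (x i - x j)))
              - m * ω₀ * x i / (hbar * (b t)^2))^2
           - (m * deriv b t * x i / (hbar * b t))^2 : ℝ) : ℂ)
          + (((m * deriv b t / (hbar * b t))
             + 2 * (lam * (c t * ∑ j ∈ univ.erase i, coth (c t * (x i - x j)))
                - m * ω₀ * x i / (hbar * (b t)^2)) * (m * deriv b t * x i / (hbar * b t)) : ℝ) : ℂ)
            * Complex.I := by
      intro i
      push_cast
      linear_combination ((m : ℂ) * ((deriv b t : ℝ) : ℂ) * ((x i : ℝ) : ℂ)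
        / ((hbar : ℂ) * ((b t : ℝ) : ℂ)))^2 * Complex.I_sq
    rw [Finset.sum_congr rfl (fun i _ => hper i), Finset.sum_add_distrib, ← Finset.sum_mul]
    push_cast
    ring
  -- closed form for the sum of the real parts
  have hSA : (∑ i : Fin N,
      ((-(lam * (c t)^2 * ∑ j ∈ univ.erase i, 1 / Real.sinh (c t * (x i - x j))^2)
        - m * ω₀ / (hbar * (b t)^2))
       + (lam * (c t * ∑ j ∈ univ.erase i, coth (c t * (x i - x j)))
          - m * ω₀ * x i / (hbar * (b t)^2))^2
       - (m * deriv b t * x i / (hbar * b t))^2))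
      = (-(lam * (c t)^2)) * (∑ i : Fin N, ∑ j ∈ univ.erase i,
            1 / Real.sinh (c t * (x i - x j))^2)
        + (N:ℝ) * (-(m * ω₀ / (hbar * (b t)^2)))
        + (lam * c t)^2 * (∑ i : Fin N, (∑ j ∈ univ.erase i, coth (c t * (x i - x j)))^2)
        + (-(2 * (lam * c t) * (m * ω₀ / (hbar * (b t)^2))))
            * (∑ i : Fin N, x i * ∑ j ∈ univ.erase i, coth (c t * (x i - x j)))
        + ((m * ω₀ / (hbar * (b t)^2))^2 - (m * deriv b t / (hbar * b t))^2)
            * (∑ i : Fin N, x i ^ 2) := by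
    have e : ∀ i : Fin N,
        ((-(lam * (c t)^2 * ∑ j ∈ univ.erase i, 1 / Real.sinh (c t * (x i - x j))^2)
          - m * ω₀ / (hbar * (b t)^2))
         + (lam * (c t * ∑ j ∈ univ.erase i, coth (c t * (x i - x j)))
            - m * ω₀ * x i / (hbar * (b t)^2))^2
         - (m * deriv b t * x i / (hbar * b t))^2)
        = (-(lam * (c t)^2)) * (∑ j ∈ univ.erase i, 1 / Real.sinh (c t * (x i - x j))^2)
          + (-(m * ω₀ / (hbar * (b t)^2)))
          + (lam * c t)^2 * (∑ j ∈ univ.erase i, coth (c t * (x i - x j)))^2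
          + (-(2 * (lam * c t) * (m * ω₀ / (hbar * (b t)^2))))
              * (x i * ∑ j ∈ univ.erase i, coth (c t * (x i - x j)))
          + ((m * ω₀ / (hbar * (b t)^2))^2 - (m * deriv b t / (hbar * b t))^2) * (x i)^2 :=
      fun i => by ring
    rw [Finset.sum_congr rfl (fun i _ => e i)]
    simp only [Finset.sum_add_distrib, ← Finset.mul_sum, Finset.sum_const,
      Finset.card_univ, Fintype.card_fin, nsmul_eq_mul]
  -- closed form for the sum of the imaginary parts
  have hSB : (∑ i : Fin N,
      ((m * deriv b t / (hbar * b t))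
       + 2 * (lam * (c t * ∑ j ∈ univ.erase i, coth (c t * (x i - x j)))
          - m * ω₀ * x i / (hbar * (b t)^2)) * (m * deriv b t * x i / (hbar * b t))))
      = (N:ℝ) * (m * deriv b t / (hbar * b t))
        + (2 * (lam * c t) * (m * deriv b t / (hbar * b t)))
            * (∑ i : Fin N, x i * ∑ j ∈ univ.erase i, coth (c t * (x i - x j)))
        + (-(2 * (m * ω₀ / (hbar * (b t)^2)) * (m * deriv b t / (hbar * b t))))
            * (∑ i : Fin N, x i ^ 2) := by
    have e : ∀ i : Fin N,
        ((m * deriv b t / (hbar * b t))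
         + 2 * (lam * (c t * ∑ j ∈ univ.erase i, coth (c t * (x i - x j)))
            - m * ω₀ * x i / (hbar * (b t)^2)) * (m * deriv b t * x i / (hbar * b t)))
        = (m * deriv b t / (hbar * b t))
          + (2 * (lam * c t) * (m * deriv b t / (hbar * b t)))
              * (x i * ∑ j ∈ univ.erase i, coth (c t * (x i - x j)))
          + (-(2 * (m * ω₀ / (hbar * (b t)^2)) * (m * deriv b t / (hbar * b t)))) * (x i)^2 :=
      fun i => by ring
    rw [Finset.sum_congr rfl (fun i _ => e i)]
    simp only [Finset.sum_add_distrib, ← Finset.mul_sum, Finset.sum_const,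
      Finset.card_univ, Fintype.card_fin, nsmul_eq_mul]
  have ha1pair : (∑ i : Fin N, ∑ j ∈ univ.filter (fun j => i < j),
        coth (c t * (x i - x j)) * ((-(c₀ * deriv b t) / (b t)^2) * (x i - x j)))
      = (-(c₀ * deriv b t) / (b t)^2) * ∑ i : Fin N, ∑ j ∈ univ.filter (fun j => i < j),
          coth (c t * (x i - x j)) * (x i - x j) := by
    rw [Finset.mul_sum]
    refine Finset.sum_congr rfl fun i _ => ?_
    rw [Finset.mul_sum]
    exact Finset.sum_congr rfl fun j _ => by ring
  have hc0' : c₀ = c t * b t := by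
    rw [hc t]
    exact (div_mul_cancel₀ c₀ (hb0 t)).symm
  have hb2eq : deriv (deriv b) t = ω₀^2/(b t)^3 - (Ω t)^2 * b t := by
    have := hErmakov t
    linarith
  have hql : -((hbar:ℂ)^2/(2*(m:ℂ))) = ((-(hbar^2/(2*m)) : ℝ) : ℂ) := by
    push_cast
    ring
  have hbt0 : b t ≠ 0 := hb0 t
  rw [hdt, Finset.sum_congr rfl (fun i (_ : i ∈ univ) => hiter i), ← Finset.sum_mul,
    hsumscalar, hSA, hSB, hKsq, hM2Q, hXK, ha1pair, hc0', hb2eq, hql]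
  apply Complex.ext <;>
    simp only [Complex.add_re, Complex.add_im, Complex.mul_re, Complex.mul_im,
      Complex.ofReal_re, Complex.ofReal_im, Complex.I_re, Complex.I_im,
      Complex.natCast_re, Complex.natCast_im, mul_zero, zero_mul, mul_one, one_mul,
      sub_zero, zero_sub, add_zero, zero_add, neg_zero, neg_neg, neg_mul, mul_neg] <;>
    field_simp <;>
    ring
end

section
/- Let N ≥ 2, m, ħ, ω > 0 and λ ∈ ℝ. Define Φ : (Fin N → ℝ) → ℝ by Φ(x) := ∏_{i<j} |x_{ij}|^{λ} · exp( − mω ∑_k x_k² / (2ħ) ). Then for every x with pairwise distinct coordinates, − (ħ²/2m) ∑_i ∂²_{x_i} Φ(x) + [ (1/2) m ω² ∑_i x_i² + (ħ² λ(λ−1)/m) ∑_{i<j} 1/x_{ij}² ] Φ(x) = (1/2) N ħ ω [ 1 + (N−1)λ ] · Φ(x). -/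
open Finset

noncomputable def gf (lam t : ℝ) : ℝ := (t ^ 2) ^ (lam / 2)

lemma gf_eq_abs (lam t : ℝ) : gf lam t = |t| ^ lam := by
  unfold gf
  rw [← sq_abs, ← Real.rpow_natCast |t| 2, ← Real.rpow_mul (abs_nonneg t)]
  norm_num
  rw [show (2:ℝ) * (lam / 2) = lam by ring]

lemma gf_neg (lam t : ℝ) : gf lam (-t) = gf lam t := by unfold gf; rw [neg_pow]; ring_nf

lemma gf_pos (lam : ℝ) {t : ℝ} (ht : t ≠ 0) : 0 < gf lam t :=
  Real.rpow_pos_of_pos (by positivity) _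

lemma hasDerivAt_gf (lam : ℝ) {t : ℝ} (ht : t ≠ 0) :
    HasDerivAt (gf lam) (lam * gf lam t / t) t := by
  have h1 : HasDerivAt (fun s : ℝ => s ^ 2) ((2:ℝ) * t) t := by
    simpa using (hasDerivAt_pow 2 t)
  have := h1.rpow_const (p := lam / 2) (Or.inl (pow_ne_zero 2 ht))
  convert this using 1
  · rfl
  unfold gf
  rw [Real.rpow_sub (by positivity), Real.rpow_one]
  field_simp

section Comb
variable {N : ℕ}

lemma erase_split (i : Fin N) :
    (univ : Finset (Fin N)).erase i
      = univ.filter (fun j => i < j) ∪ univ.filter (fun j => j < i) := by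
  ext j
  simp only [mem_erase, mem_union, mem_filter, mem_univ, true_and, and_true]
  rw [Fin.lt_def, Fin.lt_def, ne_eq, Fin.ext_iff]
  omega

lemma erase_split_disj (i : Fin N) :
    Disjoint ((univ : Finset (Fin N)).filter (fun j => i < j))
      (univ.filter (fun j => j < i)) := by
  simp only [Finset.disjoint_filter]
  intro j _ h1 h2
  exact absurd (h1.trans h2) (lt_irrefl i)

lemma lower_eq_upper (f : Fin N → Fin N → ℝ) :
    ∑ i : Fin N, ∑ j ∈ univ.filter (fun j => j < i), f i j
      = ∑ i : Fin N, ∑ j ∈ univ.filter (fun j => i < j), f j i := by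
  rw [Finset.sum_comm' (t' := univ) (s' := fun j => univ.filter (fun i => j < i))]
  intro i j
  simp

lemma double_split (f : Fin N → Fin N → ℝ) :
    ∑ i : Fin N, ∑ j ∈ univ.erase i, f i j
      = ∑ i : Fin N, ∑ j ∈ univ.filter (fun j => i < j), f i j
        + ∑ i : Fin N, ∑ j ∈ univ.filter (fun j => i < j), f j i := by
  calc ∑ i : Fin N, ∑ j ∈ univ.erase i, f i j
      = ∑ i : Fin N, (∑ j ∈ univ.filter (fun j => i < j), f i j
          + ∑ j ∈ univ.filter (fun j => j < i), f i j) := by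
        refine Finset.sum_congr rfl fun i _ => ?_
        rw [erase_split, Finset.sum_union (erase_split_disj i)]
    _ = _ := by rw [Finset.sum_add_distrib, lower_eq_upper]

lemma offdiag_swap (f : Fin N → Fin N → ℝ) :
    ∑ i : Fin N, ∑ j ∈ univ.erase i, f i j
      = ∑ i : Fin N, ∑ j ∈ univ.erase i, f j i := by
  rw [double_split, double_split (fun i j => f j i), add_comm]

end Comb



def T3 (N : ℕ) : Finset (Fin N × Fin N × Fin N) :=
  (univ ×ˢ univ ×ˢ univ).filter
    (fun t => t.1 ≠ t.2.1 ∧ t.1 ≠ t.2.2 ∧ t.2.1 ≠ t.2.2)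

lemma triple_flatten (F : Fin N → Fin N → Fin N → ℝ) :
    ∑ i : Fin N, ∑ j ∈ univ.erase i, ∑ k ∈ (univ.erase i).erase j, F i j k
      = ∑ t ∈ T3 N, F t.1 t.2.1 t.2.2 := by
  have e2 : ∀ i j : Fin N, ((univ : Finset (Fin N)).erase i).erase j
      = univ.filter (fun k => i ≠ k ∧ j ≠ k) := by
    intro i j; ext k; simp [ne_comm]; tauto
  have e1 : ∀ i : Fin N, (univ : Finset (Fin N)).erase i
      = univ.filter (fun j => i ≠ j) := by
    intro i; ext j; simp [ne_comm]
  rw [T3, Finset.sum_filter, Finset.sum_product]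
  refine Finset.sum_congr rfl fun i _ => ?_
  rw [Finset.sum_product]
  simp only [e2]
  rw [e1, Finset.sum_filter]
  refine Finset.sum_congr rfl fun j _ => ?_
  rw [Finset.sum_filter]
  by_cases h : i = j <;> simp [h, ite_and]

def cyc (N : ℕ) : (Fin N × Fin N × Fin N) ≃ (Fin N × Fin N × Fin N) where
  toFun t := (t.2.1, t.2.2, t.1)
  invFun t := (t.2.2, t.1, t.2.1)
  left_inv t := rfl
  right_inv t := rfl

lemma cyc_mem (t : Fin N × Fin N × Fin N) : t ∈ T3 N ↔ cyc N t ∈ T3 N := by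
  simp [T3, cyc]; tauto

lemma sum_cyc (F : Fin N × Fin N × Fin N → ℝ) :
    ∑ t ∈ T3 N, F (cyc N t) = ∑ t ∈ T3 N, F t :=
  Finset.sum_equiv (cyc N) (fun t => cyc_mem t) (fun t _ => rfl)

lemma three_id {a b c : ℝ} (h1 : a ≠ b) (h2 : a ≠ c) (h3 : b ≠ c) :
    (a - b)⁻¹ * (a - c)⁻¹ + (b - c)⁻¹ * (b - a)⁻¹ + (c - a)⁻¹ * (c - b)⁻¹ = 0 := by
  have d1 := sub_ne_zero_of_ne h1
  have d2 := sub_ne_zero_of_ne h2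
  have d3 := sub_ne_zero_of_ne h3
  have d4 := sub_ne_zero_of_ne h1.symm
  have d5 := sub_ne_zero_of_ne h2.symm
  have d6 := sub_ne_zero_of_ne h3.symm
  field_simp
  ring

lemma cross_vanish (x : Fin N → ℝ) (hx : ∀ i j : Fin N, i ≠ j → x i ≠ x j) :
    ∑ i : Fin N, ∑ j ∈ univ.erase i, ∑ k ∈ (univ.erase i).erase j,
        (x i - x j)⁻¹ * (x i - x k)⁻¹ = 0 := by
  rw [triple_flatten]
  set F : Fin N × Fin N × Fin N → ℝ :=
    fun t => (x t.1 - x t.2.1)⁻¹ * (x t.1 - x t.2.2)⁻¹ with hF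
  have h3 : (3 : ℝ) * ∑ t ∈ T3 N, F t = 0 := by
    have c1 := sum_cyc (N := N) F
    have c2 := sum_cyc (N := N) (fun t => F (cyc N t))
    calc (3:ℝ) * ∑ t ∈ T3 N, F t
        = ∑ t ∈ T3 N, (F t + F (cyc N t) + F (cyc N (cyc N t))) := by
          rw [Finset.sum_add_distrib, Finset.sum_add_distrib, c1, c2, c1]; ring
      _ = 0 := by
          refine Finset.sum_eq_zero fun t ht => ?_
          obtain ⟨a, b, c⟩ := t
          simp only [T3, mem_filter, mem_product, mem_univ, true_and] at ht
          obtain ⟨h1, h2, h3⟩ := ht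
          have := three_id (hx a b h1) (hx a c h2) (hx b c h3)
          simp only [hF, cyc, Equiv.coe_fn_mk]
          linarith [this]
  have := mul_eq_zero.mp h3
  simpa using this
variable {N : ℕ}

lemma prod_update_eq (lam : ℝ) (x : Fin N → ℝ) (i : Fin N) (y : ℝ) :
    (∏ p : Fin N, ∏ q ∈ univ.filter (fun q => p < q),
        gf lam (Function.update x i y p - Function.update x i y q))
      = (∏ p : Fin N, ∏ q ∈ univ.filter (fun q => p < q),
          (if p = i ∨ q = i then 1 else gf lam (x p - x q)))
        * ∏ j ∈ univ.erase i, gf lam (y - x j) := by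
  have key : ∀ p : Fin N, ∀ q ∈ univ.filter (fun q => p < q),
      gf lam (Function.update x i y p - Function.update x i y q)
        = (if p = i ∨ q = i then 1 else gf lam (x p - x q))
          * (if p = i then gf lam (y - x q) else if q = i then gf lam (y - x p) else 1) := by
    intro p q hq
    rw [mem_filter] at hq
    have hpq : p ≠ q := ne_of_lt hq.2
    by_cases hp : p = i
    · have hqi : q ≠ i := fun h => hpq (hp.trans h.symm)
      simp [hp, hqi, Function.update_apply, Function.update_self]
    · by_cases hqi : q = i
      · simp only [hp, hqi, Function.update_apply, if_neg hp, if_pos rfl, or_true, if_true,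
          Function.update_self, one_mul, if_false]
        rw [show x p - y = -(y - x p) by ring, gf_neg]
      · simp [hp, hqi, Function.update_apply]
  rw [Finset.prod_congr rfl (fun p _ => Finset.prod_congr rfl (key p))]
  simp only [Finset.prod_mul_distrib]
  congr 1
  -- now: ∏ p, ∏ q ∈ filter (p<·), C p q = ∏ j ∈ erase i, gf lam (y - x j)
  rw [← Finset.mul_prod_erase univ _ (mem_univ i)]
  have hfi : ∏ q ∈ univ.filter (fun q => i < q),
      (if i = i then gf lam (y - x q) else if q = i then gf lam (y - x i) else 1)
      = ∏ q ∈ univ.filter (fun q => i < q), gf lam (y - x q) :=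
    Finset.prod_congr rfl (fun q _ => by simp)
  have hrest : ∏ p ∈ univ.erase i, ∏ q ∈ univ.filter (fun q => p < q),
      (if p = i then gf lam (y - x q) else if q = i then gf lam (y - x p) else 1)
      = ∏ p ∈ univ.filter (fun p => p < i), gf lam (y - x p) := by
    have step : ∀ p ∈ univ.erase i, (∏ q ∈ univ.filter (fun q => p < q),
        (if p = i then gf lam (y - x q) else if q = i then gf lam (y - x p) else 1))
        = (if p < i then gf lam (y - x p) else 1) := by
      intro p hp
      rw [mem_erase] at hp
      have : ∀ q ∈ univ.filter (fun q => p < q),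
          (if p = i then gf lam (y - x q) else if q = i then gf lam (y - x p) else 1)
          = (if q = i then gf lam (y - x p) else 1) := fun q _ => by simp [hp.1]
      rw [Finset.prod_congr rfl this, Finset.prod_ite_eq']
      simp
    rw [Finset.prod_congr rfl step, ← Finset.prod_filter]
    congr 1
    ext p
    simp only [mem_filter, mem_erase, mem_univ, true_and, and_true]
    exact ⟨fun h => h.2, fun h => ⟨ne_of_lt h, h⟩⟩
  rw [hfi, hrest, ← Finset.prod_union]
  · congr 1
    ext j
    simp only [mem_union, mem_filter, mem_univ, true_and, mem_erase, and_true]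
    rw [Fin.lt_def, Fin.lt_def, ne_eq, Fin.ext_iff]
    omega
  · simp only [Finset.disjoint_filter]
    intro j _ h1 h2
    exact absurd (h1.trans h2) (lt_irrefl i)

lemma second_deriv_eq (lam m hbar ω : ℝ) (hm : 0 < m) (hhbar : 0 < hbar)
    (Φ : (Fin N → ℝ) → ℝ)
    (hΦ : ∀ x, Φ x = (∏ i : Fin N, ∏ j ∈ univ.filter (fun j => i < j), |x i - x j| ^ lam)
      * Real.exp (- m * ω * (∑ k, (x k) ^ 2) / (2 * hbar)))
    (x : Fin N → ℝ) (hx : ∀ i j : Fin N, i ≠ j → x i ≠ x j) (i : Fin N) :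
    iteratedDeriv 2 (fun y => Φ (Function.update x i y)) (x i)
      = Φ x * ((lam * (∑ j ∈ univ.erase i, (x i - x j)⁻¹) - (m * ω / hbar) * x i) ^ 2
          + (- lam * (∑ j ∈ univ.erase i, ((x i - x j)⁻¹) ^ 2) - m * ω / hbar)) := by
  set A : ℝ := ∏ p : Fin N, ∏ q ∈ univ.filter (fun q => p < q),
      (if p = i ∨ q = i then 1 else gf lam (x p - x q)) with hA
  set S : ℝ := ∑ k ∈ univ.erase i, (x k) ^ 2 with hS
  set Q : ℝ → ℝ := fun y => ∏ j ∈ univ.erase i, gf lam (y - x j) with hQdef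
  set Ex : ℝ → ℝ := fun y => Real.exp (- m * ω * (y ^ 2 + S) / (2 * hbar)) with hExdef
  set b : ℝ := m * ω / hbar with hb
  set h : ℝ → ℝ := fun y => Φ (Function.update x i y) with hh
  set L : ℝ → ℝ := fun y => lam * (∑ j ∈ univ.erase i, (y - x j)⁻¹) - b * y with hL
  -- representation of h
  have hsum : ∀ y : ℝ, ∑ k, (Function.update x i y k) ^ 2 = y ^ 2 + S := by
    intro y
    have : ∀ k, (Function.update x i y k) ^ 2
        = Function.update (fun k => (x k) ^ 2) i (y ^ 2) k := by
      intro k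
      simp only [Function.update_apply]
      split <;> rfl
    rw [Finset.sum_congr rfl (fun k _ => this k), Finset.sum_update_of_mem (mem_univ i),
      hS, Finset.erase_eq]
  have hrepr : ∀ y : ℝ, h y = A * (Q y * Ex y) := by
    intro y
    show Φ (Function.update x i y) = _
    rw [hΦ]
    have habs : (∏ p : Fin N, ∏ q ∈ univ.filter (fun q => p < q),
        |Function.update x i y p - Function.update x i y q| ^ lam)
        = ∏ p : Fin N, ∏ q ∈ univ.filter (fun q => p < q),
          gf lam (Function.update x i y p - Function.update x i y q) := by
      refine Finset.prod_congr rfl fun p _ => Finset.prod_congr rfl fun q _ => ?_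
      rw [gf_eq_abs]
    rw [habs, prod_update_eq, hsum y]
    ring
  -- derivative of h on the open set
  have key : ∀ y : ℝ, (∀ j ∈ univ.erase i, y ≠ x j) →
      HasDerivAt h (A * (Q y * Ex y) * L y) y := by
    intro y hy
    have hQ' : HasDerivAt Q (Q y * (lam * ∑ j ∈ univ.erase i, (y - x j)⁻¹)) y := by
      have base : ∀ j ∈ univ.erase i, HasDerivAt (fun y => gf lam (y - x j))
          (lam * gf lam (y - x j) / (y - x j)) y := by
        intro j hj
        have hne : y - x j ≠ 0 := sub_ne_zero_of_ne (hy j hj)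
        have := (hasDerivAt_gf lam hne).comp y ((hasDerivAt_id y).sub_const (x j))
        rw [mul_one] at this
        exact this
      have := HasDerivAt.finset_prod base
      convert this using 1
      · rfl
      · rfl
      · ext z; simp [hQdef]
      rw [Finset.mul_sum, Finset.mul_sum]
      refine Finset.sum_congr rfl fun j hj => ?_
      simp only [hQdef, smul_eq_mul]
      rw [← Finset.prod_erase_mul (univ.erase i) _ hj]
      have hne : y - x j ≠ 0 := sub_ne_zero_of_ne (hy j hj)
      field_simp
    have hEx' : HasDerivAt Ex (Ex y * (- b * y)) y := by
      have hin : HasDerivAt (fun y : ℝ => - m * ω * (y ^ 2 + S) / (2 * hbar))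
          (- m * ω * (2 * y) / (2 * hbar)) y := by
        have := (((hasDerivAt_pow 2 y).add_const S).const_mul (- m * ω)).div_const (2 * hbar)
        simpa using this
      have := hin.exp
      have heq : Real.exp (- m * ω * (y ^ 2 + S) / (2 * hbar)) * (- m * ω * (2 * y) / (2 * hbar))
          = Ex y * (- b * y) := by
        rw [hExdef, hb]
        have h2 : (2 : ℝ) * hbar ≠ 0 := by positivity
        field_simp
      exact heq ▸ this
    have := ((hQ'.mul hEx').const_mul A)
    convert this using 1
    · rfl
    · rfl
    · exact funext hrepr
    · simp only [hL]
      ring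
  have hU : IsOpen {y : ℝ | ∀ j ∈ univ.erase i, y ≠ x j} := by
    have : {y : ℝ | ∀ j ∈ univ.erase i, y ≠ x j}
        = ⋂ j ∈ (univ.erase i : Finset (Fin N)), {y : ℝ | y ≠ x j} := by
      ext y; simp
    rw [this]
    exact isOpen_biInter_finset (fun j _ => isOpen_ne)
  have hxU : x i ∈ {y : ℝ | ∀ j ∈ univ.erase i, y ≠ x j} := by
    intro j hj
    exact hx i j (mem_erase.mp hj).1.symm
  have hev : deriv h =ᶠ[nhds (x i)] fun y => h y * L y := by
    filter_upwards [hU.mem_nhds hxU] with y hy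
    rw [(key y hy).deriv, hrepr y]
  have hL' : HasDerivAt L (- lam * (∑ j ∈ univ.erase i, ((x i - x j)⁻¹) ^ 2) - b) (x i) := by
    have base : ∀ j ∈ univ.erase i, HasDerivAt (fun y => (y - x j)⁻¹)
        (- (((x i - x j)⁻¹) ^ 2)) (x i) := by
      intro j hj
      have hne : x i - x j ≠ 0 := sub_ne_zero_of_ne (hx i j (mem_erase.mp hj).1.symm)
      have := (((hasDerivAt_id (x i)).sub_const (x j)).inv hne)
      convert this using 1
      · rfl
      · rfl
      field_simp
      simp [div_eq_mul_inv, inv_pow]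
      · rfl
      · simp [div_eq_mul_inv, inv_pow]
    have hsum := HasDerivAt.sum base
    have := (hsum.const_mul lam).sub ((hasDerivAt_id (x i)).const_mul b)
    convert this using 1
    · rfl
    · rfl
    · ext z; simp [hL]
    rw [mul_one, Finset.mul_sum, Finset.mul_sum]
    congr 1
    exact Finset.sum_congr rfl fun j _ => by ring
  have h2 : iteratedDeriv 2 h (x i) = deriv (deriv h) (x i) := by
    rw [show (2:ℕ) = 1 + 1 from rfl, iteratedDeriv_succ, iteratedDeriv_one]
  have hmul : HasDerivAt (fun y => h y * L y)
      (A * (Q (x i) * Ex (x i)) * L (x i) * L (x i)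
        + h (x i) * (- lam * (∑ j ∈ univ.erase i, ((x i - x j)⁻¹) ^ 2) - b)) (x i) :=
    (key (x i) hxU).mul hL'
  have hΦx : h (x i) = Φ x := by rw [hh]; simp [Function.update_eq_self]
  rw [h2, hev.deriv_eq, hmul.deriv]
  rw [← hrepr (x i), hΦx]
  have hLval : L (x i) = lam * (∑ j ∈ univ.erase i, (x i - x j)⁻¹) - b * x i := rfl
  rw [hLval]
  ring

lemma id_two (hN : 1 ≤ N) (x : Fin N → ℝ) (hx : ∀ i j : Fin N, i ≠ j → x i ≠ x j) :
    ∑ i : Fin N, ∑ j ∈ univ.erase i, x i * (x i - x j)⁻¹ = (N : ℝ) * ((N : ℝ) - 1) / 2 := by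
  have swap := offdiag_swap (N := N) (fun i j => x i * (x i - x j)⁻¹)
  have hsum : (∑ i : Fin N, ∑ j ∈ univ.erase i, x i * (x i - x j)⁻¹)
      + ∑ i : Fin N, ∑ j ∈ univ.erase i, x i * (x i - x j)⁻¹
      = (N : ℝ) * ((N : ℝ) - 1) := by
    nth_rewrite 2 [swap]
    rw [← Finset.sum_add_distrib]
    calc ∑ i : Fin N, (∑ j ∈ univ.erase i, x i * (x i - x j)⁻¹
          + ∑ j ∈ univ.erase i, x j * (x j - x i)⁻¹)
        = ∑ i : Fin N, ∑ j ∈ univ.erase i,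
            (x i * (x i - x j)⁻¹ + x j * (x j - x i)⁻¹) := by
          exact Finset.sum_congr rfl fun i _ => (Finset.sum_add_distrib).symm
      _ = ∑ i : Fin N, ∑ _j ∈ univ.erase i, (1 : ℝ) := by
          refine Finset.sum_congr rfl fun i _ => Finset.sum_congr rfl fun j hj => ?_
          have hne : x i - x j ≠ 0 :=
            sub_ne_zero_of_ne (hx i j (mem_erase.mp hj).1.symm)
          have hne' : x j - x i ≠ 0 := by
            rw [show x j - x i = -(x i - x j) by ring]; exact neg_ne_zero.mpr hne
          field_simp
          ring
      _ = (N : ℝ) * ((N : ℝ) - 1) := by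
          simp only [Finset.sum_const, nsmul_eq_mul, mul_one,
            Finset.card_erase_of_mem (mem_univ _), card_univ, Fintype.card_fin]
          rw [Nat.cast_sub hN]
          push_cast
          ring
  linarith

lemma id_one (x : Fin N → ℝ) (hx : ∀ i j : Fin N, i ≠ j → x i ≠ x j) :
    ∑ i : Fin N, (∑ j ∈ univ.erase i, (x i - x j)⁻¹) ^ 2
      = ∑ i : Fin N, ∑ j ∈ univ.erase i, ((x i - x j)⁻¹) ^ 2 := by
  have expand : ∀ i : Fin N, (∑ j ∈ univ.erase i, (x i - x j)⁻¹) ^ 2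
      = ∑ j ∈ univ.erase i, (((x i - x j)⁻¹) ^ 2
          + ∑ k ∈ (univ.erase i).erase j, (x i - x j)⁻¹ * (x i - x k)⁻¹) := by
    intro i
    rw [sq, Finset.sum_mul_sum]
    refine Finset.sum_congr rfl fun j hj => ?_
    rw [← Finset.add_sum_erase _ _ hj, sq]
  rw [Finset.sum_congr rfl (fun i _ => expand i)]
  have split : ∑ i : Fin N, ∑ j ∈ univ.erase i, (((x i - x j)⁻¹) ^ 2
      + ∑ k ∈ (univ.erase i).erase j, (x i - x j)⁻¹ * (x i - x k)⁻¹)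
      = (∑ i : Fin N, ∑ j ∈ univ.erase i, ((x i - x j)⁻¹) ^ 2)
        + ∑ i : Fin N, ∑ j ∈ univ.erase i, ∑ k ∈ (univ.erase i).erase j,
            (x i - x j)⁻¹ * (x i - x k)⁻¹ := by
    rw [← Finset.sum_add_distrib]
    exact Finset.sum_congr rfl fun i _ => Finset.sum_add_distrib
  rw [split, cross_vanish x hx, add_zero]

lemma id_three (x : Fin N → ℝ) :
    ∑ i : Fin N, ∑ j ∈ univ.erase i, ((x i - x j)⁻¹) ^ 2
      = 2 * ∑ i : Fin N, ∑ j ∈ univ.filter (fun j => i < j), 1 / (x i - x j) ^ 2 := by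
  rw [double_split]
  have h1 : ∀ i j : Fin N, ((x j - x i)⁻¹) ^ 2 = ((x i - x j)⁻¹) ^ 2 := by
    intro i j
    rw [show x j - x i = -(x i - x j) by ring, inv_neg, neg_sq]
  have h2 : ∀ i j : Fin N, ((x i - x j)⁻¹) ^ 2 = 1 / (x i - x j) ^ 2 := by
    intro i j; rw [one_div, inv_pow]
  rw [two_mul]
  congr 1
  · exact Finset.sum_congr rfl fun i _ => Finset.sum_congr rfl fun j _ => h2 i j
  · exact Finset.sum_congr rfl fun i _ => Finset.sum_congr rfl fun j _ =>
      (h1 i j).trans (h2 i j)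


/-- The real-valued Jastrow wavefunction
`Φ(x) = ∏_{i<j}|x_{ij}|^λ exp(−mω∑x_k²/(2ħ))` is an exact eigenstate of the harmonically
trapped rational Calogero model with inverse-square interactions, with eigenvalue
`(1/2)Nħω[1 + (N−1)λ]`, away from the coincidence hyperplanes. -/
theorem stmt_15 (N : ℕ) (hN : 2 ≤ N) (m hbar ω : ℝ)
    (hm : 0 < m) (hhbar : 0 < hbar) (hω : 0 < ω) (lam : ℝ)
    (Φ : (Fin N → ℝ) → ℝ)
    (hΦ : ∀ x, Φ x = (∏ i : Fin N, ∏ j ∈ univ.filter (fun j => i < j), |x i - x j| ^ lam)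
      * Real.exp (- m * ω * (∑ k, (x k) ^ 2) / (2 * hbar))) :
    ∀ x : Fin N → ℝ, (∀ i j : Fin N, i ≠ j → x i ≠ x j) →
      - (hbar ^ 2 / (2 * m))
          * ∑ i : Fin N, iteratedDeriv 2 (fun y => Φ (Function.update x i y)) (x i)
        + ((1 / 2) * m * ω ^ 2 * ∑ i, (x i) ^ 2
            + (hbar ^ 2 * lam * (lam - 1) / m)
              * ∑ i : Fin N, ∑ j ∈ univ.filter (fun j => i < j), 1 / (x i - x j) ^ 2) * Φ x
      = (1 / 2) * (N : ℝ) * hbar * ω * (1 + ((N : ℝ) - 1) * lam) * Φ x := by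
  intro x hx
  have hd : ∀ i : Fin N, iteratedDeriv 2 (fun y => Φ (Function.update x i y)) (x i)
      = Φ x * ((lam * (∑ j ∈ univ.erase i, (x i - x j)⁻¹) - (m * ω / hbar) * x i) ^ 2
          + (- lam * (∑ j ∈ univ.erase i, ((x i - x j)⁻¹) ^ 2) - m * ω / hbar)) :=
    fun i => second_deriv_eq lam m hbar ω hm hhbar Φ hΦ x hx i
  rw [Finset.sum_congr rfl (fun i _ => hd i), ← Finset.mul_sum]
  set b : ℝ := m * ω / hbar with hb
  set V : ℝ := ∑ i : Fin N, ∑ j ∈ univ.filter (fun j => i < j), 1 / (x i - x j) ^ 2 with hV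
  set T : ℝ := ∑ i, (x i) ^ 2 with hT
  have hexpand : ∑ i : Fin N,
      ((lam * (∑ j ∈ univ.erase i, (x i - x j)⁻¹) - b * x i) ^ 2
        + (- lam * (∑ j ∈ univ.erase i, ((x i - x j)⁻¹) ^ 2) - b))
      = lam ^ 2 * (∑ i : Fin N, (∑ j ∈ univ.erase i, (x i - x j)⁻¹) ^ 2)
        - 2 * lam * b * (∑ i : Fin N, ∑ j ∈ univ.erase i, x i * (x i - x j)⁻¹)
        + b ^ 2 * T
        - lam * (∑ i : Fin N, ∑ j ∈ univ.erase i, ((x i - x j)⁻¹) ^ 2)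
        - (N : ℝ) * b := by
    have step : ∀ i : Fin N,
        ((lam * (∑ j ∈ univ.erase i, (x i - x j)⁻¹) - b * x i) ^ 2
          + (- lam * (∑ j ∈ univ.erase i, ((x i - x j)⁻¹) ^ 2) - b))
        = lam ^ 2 * (∑ j ∈ univ.erase i, (x i - x j)⁻¹) ^ 2
          - 2 * lam * b * (x i * (∑ j ∈ univ.erase i, (x i - x j)⁻¹))
          + b ^ 2 * (x i) ^ 2
          - lam * (∑ j ∈ univ.erase i, ((x i - x j)⁻¹) ^ 2)
          - b := fun i => by ring
    rw [Finset.sum_congr rfl (fun i _ => step i)]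
    rw [Finset.sum_sub_distrib, Finset.sum_sub_distrib, Finset.sum_add_distrib,
      Finset.sum_sub_distrib]
    rw [← Finset.mul_sum, ← Finset.mul_sum, ← Finset.mul_sum, ← Finset.mul_sum, hT]
    rw [Finset.sum_const, card_univ, Fintype.card_fin, nsmul_eq_mul]
    have hms : ∑ i : Fin N, x i * ∑ j ∈ univ.erase i, (x i - x j)⁻¹
        = ∑ i : Fin N, ∑ j ∈ univ.erase i, x i * (x i - x j)⁻¹ :=
      Finset.sum_congr rfl fun i _ => Finset.mul_sum _ _ _
    rw [hms]
  have hN1 : 1 ≤ N := le_trans (by norm_num) hN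
  rw [hexpand, id_one x hx, id_two hN1 x hx, id_three x, ← hV]
  have hb2 : b = m * ω / hbar := hb
  have hmne : m ≠ 0 := ne_of_gt hm
  have hbarne : hbar ≠ 0 := ne_of_gt hhbar
  rw [hb2]
  field_simp
  ring
end

section
/- Let N ≥ 2, m, ħ, ω > 0 and c ∈ ℝ. Define Φ : (Fin N → ℝ) → ℝ by Φ(x) := ∏_{i<j} exp( c·|x_{ij}| ) · exp( − mω ∑_k x_k² / (2ħ) ). Then for every x : Fin N → ℝ with pairwise distinct coordinates, − (ħ²/2m) ∑_i ∂²_{x_i} Φ(x) + [ (1/2) m ω² ∑_i x_i² − ħ ω c ∑_{i<j} |x_{ij}| ] Φ(x) = [ (1/2) N ħ ω − ħ² c² N(N²−1) / (6m) ] · Φ(x). -/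
open Finset

lemma deriv2_exp_quad (A k B a : ℝ) :
    iteratedDeriv 2 (fun y : ℝ => Real.exp (A * y - k * y ^ 2 + B)) a
      = Real.exp (A * a - k * a ^ 2 + B) * ((A - 2 * k * a) ^ 2 - 2 * k) := by
  have hf : ∀ y : ℝ, HasDerivAt (fun y => Real.exp (A * y - k * y ^ 2 + B))
      (Real.exp (A * y - k * y ^ 2 + B) * (A - 2 * k * y)) y := by
    intro y
    have h1 : HasDerivAt (fun y : ℝ => A * y) A y := by
      simpa using (hasDerivAt_id y).const_mul A
    have h2 : HasDerivAt (fun y : ℝ => k * y ^ 2) (k * (2 * y)) y := by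
      simpa using (hasDerivAt_pow 2 y).const_mul k
    have := ((h1.sub h2).add_const B).exp
    refine this.congr_deriv ?_
    simp only [Pi.sub_apply]
    ring
  have hd : deriv (fun y : ℝ => Real.exp (A * y - k * y ^ 2 + B))
      = fun y => Real.exp (A * y - k * y ^ 2 + B) * (A - 2 * k * y) :=
    funext fun y => (hf y).deriv
  rw [iteratedDeriv_succ, iteratedDeriv_one, hd]
  have hlin : HasDerivAt (fun y : ℝ => A - 2 * k * y) (-(2 * k)) a := by
    simpa using (((hasDerivAt_id a).const_mul (2 * k)).const_sub A)
  have h2 := (hf a).mul hlin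
  have h3 : HasDerivAt (fun y => Real.exp (A * y - k * y ^ 2 + B) * (A - 2 * k * y)) _ a := h2
  rw [h3.deriv]; ring

lemma iteratedDeriv2_congr {f g : ℝ → ℝ} {a : ℝ} (h : f =ᶠ[nhds a] g) :
    iteratedDeriv 2 f a = iteratedDeriv 2 g a := by
  simp only [iteratedDeriv_succ, iteratedDeriv_one]
  exact h.deriv.deriv_eq

lemma sum_range_cast (n : ℕ) : ∑ k ∈ range n, (k : ℝ) = n * (n - 1) / 2 := by
  induction n with
  | zero => simp
  | succ n ih => rw [Finset.sum_range_succ, ih]; push_cast; ring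

lemma sum_range_sq_cast (n : ℕ) :
    ∑ k ∈ range n, (k : ℝ) ^ 2 = n * (n - 1) * (2 * n - 1) / 6 := by
  induction n with
  | zero => simp
  | succ n ih => rw [Finset.sum_range_succ, ih]; push_cast; ring

lemma sum_fin_sq (N : ℕ) :
    ∑ k : Fin N, (2 * (k : ℝ) - ((N : ℝ) - 1)) ^ 2 = N * ((N : ℝ) ^ 2 - 1) / 3 := by
  rw [Fin.sum_univ_eq_sum_range (fun n : ℕ => (2 * (n : ℝ) - ((N : ℝ) - 1)) ^ 2) N]
  have expand : ∀ r : ℝ, (2 * r - ((N : ℝ) - 1)) ^ 2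
      = 4 * r ^ 2 - 4 * ((N : ℝ) - 1) * r + ((N : ℝ) - 1) ^ 2 := by intro r; ring
  simp only [expand]
  rw [Finset.sum_add_distrib, Finset.sum_sub_distrib, ← Finset.mul_sum, ← Finset.mul_sum,
    Finset.sum_const, sum_range_cast, sum_range_sq_cast, card_range, nsmul_eq_mul]
  ring

lemma erase_split_s17 {N : ℕ} (i : Fin N) (g : Fin N → ℝ) :
    ∑ j ∈ univ.erase i, g j = ∑ j ∈ Iio i, g j + ∑ j ∈ Ioi i, g j := by
  rw [← Finset.sum_union (by
    rw [Finset.disjoint_left]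
    intro a h1 h2
    simp only [Finset.mem_Iio] at h1
    simp only [Finset.mem_Ioi] at h2
    exact absurd (lt_trans h1 h2) (lt_irrefl a))]
  apply Finset.sum_congr _ (fun _ _ => rfl)
  ext j
  simp only [Finset.mem_union, Finset.mem_Iio, Finset.mem_Ioi, Finset.mem_erase,
    Finset.mem_univ, and_true]
  exact ⟨fun h => lt_or_gt_of_ne h, fun h => h.elim ne_of_lt (fun h' => (ne_of_lt h').symm)⟩

lemma Ioi_filter {N : ℕ} (i : Fin N) : univ.filter (fun j => i < j) = Ioi i := by
  ext j; simp

lemma sum_Iio_swap {N : ℕ} (f : Fin N → Fin N → ℝ) :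
    ∑ i, ∑ j ∈ Iio i, f i j = ∑ j, ∑ i ∈ Ioi j, f i j := by
  apply Finset.sum_comm'
  intro i j
  simp [Finset.mem_Iio, Finset.mem_Ioi, and_comm]

lemma pair_split {N : ℕ} (F : Fin N → Fin N → ℝ) (hsymm : ∀ a b, F a b = F b a) (i : Fin N) :
    ∑ a, ∑ b ∈ Ioi a, F a b
      = ∑ b ∈ univ.erase i, F i b + ∑ a ∈ univ.erase i, ∑ b ∈ (Ioi a).erase i, F a b := by
  rw [← Finset.add_sum_erase univ _ (mem_univ i)]
  have step : ∀ a ∈ univ.erase i, ∑ b ∈ Ioi a, F a b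
      = (if a < i then F a i else 0) + ∑ b ∈ (Ioi a).erase i, F a b := by
    intro a _
    by_cases h : a < i
    · rw [if_pos h, ← Finset.add_sum_erase (Ioi a) (F a) (Finset.mem_Ioi.2 h)]
    · rw [if_neg h, Finset.erase_eq_of_notMem (by simp [Finset.mem_Ioi, h]), zero_add]
  rw [Finset.sum_congr rfl step, Finset.sum_add_distrib]
  have h1 : ∑ a ∈ univ.erase i, (if a < i then F a i else 0) = ∑ a ∈ Iio i, F i a := by
    rw [← Finset.sum_filter]
    have : (univ.erase i).filter (fun a => a < i) = Iio i := by
      ext a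
      simp only [Finset.mem_filter, Finset.mem_erase, Finset.mem_univ, true_and,
        Finset.mem_Iio, and_iff_right_iff_imp]
      exact fun h => ⟨ne_of_lt h, trivial⟩
    rw [this]
    exact Finset.sum_congr rfl (fun a _ => hsymm a i)
  rw [h1, erase_split_s17 i (fun b => F i b)]
  ring

lemma sum_sign_mul {N : ℕ} (x : Fin N → ℝ) (hx : ∀ i j : Fin N, i ≠ j → x i ≠ x j) :
    ∑ i : Fin N, x i * (∑ j ∈ univ.erase i, (if x j < x i then (1:ℝ) else -1))
      = ∑ i : Fin N, ∑ j ∈ Ioi i, |x i - x j| := by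
  have key : ∀ i : Fin N, x i * (∑ j ∈ univ.erase i, (if x j < x i then (1:ℝ) else -1))
      = ∑ j ∈ Iio i, x i * (if x j < x i then (1:ℝ) else -1)
        + ∑ j ∈ Ioi i, x i * (if x j < x i then (1:ℝ) else -1) := by
    intro i
    rw [Finset.mul_sum, erase_split_s17 i]
  simp only [key]
  rw [Finset.sum_add_distrib, sum_Iio_swap (fun i j => x i * (if x j < x i then (1:ℝ) else -1)),
    ← Finset.sum_add_distrib]
  apply Finset.sum_congr rfl
  intro i _
  rw [← Finset.sum_add_distrib]
  apply Finset.sum_congr rfl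
  intro j hj
  have hij : i < j := Finset.mem_Ioi.1 hj
  have hne := hx i j (ne_of_lt hij)
  rcases lt_or_gt_of_ne hne with h | h
  · rw [if_pos, if_neg (not_lt.2 (le_of_lt h)), abs_of_neg (by linarith : x i - x j < 0)]
    · ring
    · exact h
  · rw [if_neg (not_lt.2 (le_of_lt h)), if_pos h, abs_of_pos (by linarith : 0 < x i - x j)]
    ring

lemma sum_sign_sq {N : ℕ} (x : Fin N → ℝ) (hx : ∀ i j : Fin N, i ≠ j → x i ≠ x j) :
    ∑ i : Fin N, (∑ j ∈ univ.erase i, (if x j < x i then (1:ℝ) else -1)) ^ 2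
      = N * ((N : ℝ) ^ 2 - 1) / 3 := by
  classical
  set r : Fin N → ℕ := fun i => (univ.filter (fun j => x j < x i)).card with hr
  have hfe : ∀ i : Fin N, (univ.erase i).filter (fun j => x j < x i)
      = univ.filter (fun j => x j < x i) := by
    intro i
    ext j
    simp only [Finset.mem_filter, Finset.mem_erase, Finset.mem_univ, true_and, and_true,
      and_iff_right_iff_imp]
    intro h
    exact fun he => absurd h (by rw [he]; exact lt_irrefl _)
  have hS : ∀ i : Fin N, ∑ j ∈ univ.erase i, (if x j < x i then (1:ℝ) else -1)
      = 2 * (r i : ℝ) - ((N : ℝ) - 1) := by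
    intro i
    have : ∀ j : Fin N, (if x j < x i then (1:ℝ) else -1)
        = 2 * (if x j < x i then (1:ℝ) else 0) - 1 := by
      intro j; by_cases h : x j < x i <;> simp [h] <;> norm_num
    rw [Finset.sum_congr rfl (fun j _ => this j), Finset.sum_sub_distrib,
      ← Finset.mul_sum, Finset.sum_boole, Finset.sum_const, hfe i, Finset.card_erase_of_mem
        (mem_univ i), Finset.card_univ, Fintype.card_fin, nsmul_eq_mul, mul_one]
    have hN1 : 1 ≤ N := Nat.one_le_iff_ne_zero.2 (by rintro rfl; exact i.elim0)
    rw [Nat.cast_sub hN1]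
    norm_num [hr]
  have hrlt : ∀ i, r i < N := by
    intro i
    have hsub : univ.filter (fun j => x j < x i) ⊆ univ.erase i := by
      intro j hj
      simp only [Finset.mem_filter] at hj
      simp only [Finset.mem_erase, Finset.mem_univ, and_true]
      exact fun he => absurd hj.2 (by rw [he]; exact lt_irrefl _)
    calc r i ≤ (univ.erase i).card := Finset.card_le_card hsub
    _ < N := by
      rw [Finset.card_erase_of_mem (mem_univ i), Finset.card_univ, Fintype.card_fin]
      have hN1 : 1 ≤ N := Nat.one_le_iff_ne_zero.2 (by rintro rfl; exact i.elim0)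
      omega
  set r' : Fin N → Fin N := fun i => ⟨r i, hrlt i⟩ with hr'
  have hinj : Function.Injective r' := by
    intro a b hab
    by_contra hne
    have hxne := hx a b hne
    have key : ∀ u v : Fin N, x u < x v → r u < r v := by
      intro u v huv
      apply Finset.card_lt_card
      rw [Finset.ssubset_iff_of_subset]
      · exact ⟨u, by simp [huv], by simp⟩
      · intro j hj
        simp only [Finset.mem_filter, Finset.mem_univ, true_and] at hj ⊢
        exact lt_trans hj huv
    have : r a = r b := by simpa [hr', Fin.ext_iff] using hab
    rcases lt_or_gt_of_ne hxne with h | h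
    · exact absurd this (ne_of_lt (key a b h))
    · exact absurd this.symm (ne_of_lt (key b a h))
  have hbij : Function.Bijective r' := (Finite.injective_iff_bijective).1 hinj
  have := Fintype.sum_bijective r' hbij
    (fun i => (∑ j ∈ univ.erase i, (if x j < x i then (1:ℝ) else -1)) ^ 2)
    (fun k => (2 * (k : ℝ) - ((N : ℝ) - 1)) ^ 2)
    (fun i => by rw [hS i])
  rw [this, sum_fin_sq]
/-- The Jastrow wavefunction `Φ(x) = ∏_{i<j} e^{c|x_{ij}|} exp(−mω∑x_k²/(2ħ))` is an exact
eigenstate of the harmonically trapped long-range Lieb–Liniger model away from the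
coincidence hyperplanes, with one-dimensional Coulomb interaction `−ħωc|x_{ij}|`, and
eigenvalue `(1/2)Nħω − ħ²c²N(N²−1)/(6m)`. -/
theorem stmt_17 (N : ℕ) (hN : 2 ≤ N) (m hbar ω : ℝ)
    (hm : 0 < m) (hhbar : 0 < hbar) (hω : 0 < ω) (c : ℝ)
    (Φ : (Fin N → ℝ) → ℝ)
    (hΦ : ∀ x, Φ x =
      (∏ i : Fin N, ∏ j ∈ univ.filter (fun j => i < j), Real.exp (c * |x i - x j|))
      * Real.exp (- m * ω * (∑ k, (x k) ^ 2) / (2 * hbar))) :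
    ∀ x : Fin N → ℝ, (∀ i j : Fin N, i ≠ j → x i ≠ x j) →
      - (hbar ^ 2 / (2 * m))
          * ∑ i : Fin N, iteratedDeriv 2 (fun y => Φ (Function.update x i y)) (x i)
        + ((1 / 2) * m * ω ^ 2 * ∑ i, (x i) ^ 2
            - hbar * ω * c
              * ∑ i : Fin N, ∑ j ∈ univ.filter (fun j => i < j), |x i - x j|) * Φ x
      = ((1 / 2) * (N : ℝ) * hbar * ω
          - hbar ^ 2 * c ^ 2 * (N : ℝ) * ((N : ℝ) ^ 2 - 1) / (6 * m)) * Φ x := by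
  intro x hx
  simp only [Ioi_filter]
  set k : ℝ := m * ω / (2 * hbar) with hk
  have hΦ' : ∀ y : Fin N → ℝ, Φ y = Real.exp
      (c * (∑ a, ∑ b ∈ Ioi a, |y a - y b|) - k * (∑ j, (y j) ^ 2)) := by
    intro y
    rw [hΦ y]
    have h1 : ∀ a : Fin N, ∏ j ∈ univ.filter (fun j => a < j), Real.exp (c * |y a - y j|)
        = Real.exp (∑ j ∈ univ.filter (fun j => a < j), c * |y a - y j|) :=
      fun a => (Real.exp_sum _ _).symm
    rw [Finset.prod_congr rfl (fun a _ => h1 a), ← Real.exp_sum, ← Real.exp_add]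
    congr 1
    simp only [Ioi_filter]
    have h2 : c * (∑ a, ∑ b ∈ Ioi a, |y a - y b|) = ∑ a, ∑ b ∈ Ioi a, c * |y a - y b| := by
      rw [Finset.mul_sum]
      exact Finset.sum_congr rfl fun a _ => Finset.mul_sum _ _ _
    rw [h2, hk]
    ring
  have hper : ∀ i : Fin N,
      iteratedDeriv 2 (fun y => Φ (Function.update x i y)) (x i)
        = Φ x * ((c * (∑ j ∈ univ.erase i, (if x j < x i then (1:ℝ) else -1))
            - 2 * k * (x i)) ^ 2 - 2 * k) := by
    intro i
    set S : ℝ := ∑ j ∈ univ.erase i, (if x j < x i then (1:ℝ) else -1) with hSdef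
    set B : ℝ := c * (∑ a ∈ univ.erase i, ∑ b ∈ (Ioi a).erase i, |x a - x b|)
        - c * (∑ j ∈ univ.erase i, (if x j < x i then (1:ℝ) else -1) * x j)
        - k * (∑ j ∈ univ.erase i, (x j) ^ 2) with hBdef
    have hev : (fun y => Φ (Function.update x i y)) =ᶠ[nhds (x i)]
        (fun y => Real.exp (c * S * y - k * y ^ 2 + B)) := by
      have hsgn : ∀ j ∈ univ.erase i, ∀ᶠ y in nhds (x i),
          |y - x j| = (if x j < x i then (1:ℝ) else -1) * (y - x j) := by
        intro j hj
        have hne : x j ≠ x i := hx j i (Finset.mem_erase.1 hj).1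
        rcases lt_or_gt_of_ne hne with h | h
        · filter_upwards [eventually_gt_nhds h] with y hy
          rw [if_pos h, one_mul, abs_of_pos (by linarith)]
        · filter_upwards [eventually_lt_nhds h] with y hy
          rw [if_neg (not_lt.2 (le_of_lt h)), abs_of_neg (by linarith)]
          ring
      filter_upwards [(Filter.eventually_all_finset (univ.erase i)).2 hsgn] with y hy
      rw [hΦ' (Function.update x i y)]
      congr 1
      have hQ : ∑ j, (Function.update x i y j) ^ 2
          = y ^ 2 + ∑ j ∈ univ.erase i, (x j) ^ 2 := by
        rw [← Finset.add_sum_erase univ _ (mem_univ i)]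
        congr 1
        · rw [Function.update_self]
        · exact Finset.sum_congr rfl fun j hj => by
            rw [Function.update_of_ne (Finset.mem_erase.1 hj).1]
      have hP : ∑ a, ∑ b ∈ Ioi a, |Function.update x i y a - Function.update x i y b|
          = (S * y - ∑ j ∈ univ.erase i, (if x j < x i then (1:ℝ) else -1) * x j)
            + ∑ a ∈ univ.erase i, ∑ b ∈ (Ioi a).erase i, |x a - x b| := by
        rw [pair_split (fun a b => |Function.update x i y a - Function.update x i y b|)
          (fun a b => abs_sub_comm _ _) i]
        congr 1
        · have hterm : ∀ b ∈ univ.erase i,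
              |Function.update x i y i - Function.update x i y b|
              = (if x b < x i then (1:ℝ) else -1) * y
                - (if x b < x i then (1:ℝ) else -1) * x b := by
            intro b hb
            rw [Function.update_self, Function.update_of_ne (Finset.mem_erase.1 hb).1,
              hy b hb]
            ring
          rw [Finset.sum_congr rfl hterm, Finset.sum_sub_distrib, ← Finset.sum_mul, hSdef]
        · exact Finset.sum_congr rfl fun a ha => Finset.sum_congr rfl fun b hb => by
            rw [Function.update_of_ne (Finset.mem_erase.1 ha).1,
              Function.update_of_ne (Finset.mem_erase.1 hb).1]
      rw [hQ, hP, hBdef]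
      ring
    rw [iteratedDeriv2_congr hev, deriv2_exp_quad]
    have hval := hev.eq_of_nhds
    simp only [Function.update_eq_self] at hval
    rw [← hval]
  have hsum : ∑ i : Fin N, iteratedDeriv 2 (fun y => Φ (Function.update x i y)) (x i)
      = Φ x * (c ^ 2 * ((N : ℝ) * ((N : ℝ) ^ 2 - 1) / 3)
          - 4 * c * k * (∑ i : Fin N, ∑ j ∈ Ioi i, |x i - x j|)
          + 4 * k ^ 2 * (∑ i, (x i) ^ 2) - (N : ℝ) * (2 * k)) := by
    rw [Finset.sum_congr rfl (fun i _ => hper i), ← Finset.mul_sum]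
    congr 1
    have expand : ∀ i : Fin N,
        (c * (∑ j ∈ univ.erase i, (if x j < x i then (1:ℝ) else -1)) - 2 * k * (x i)) ^ 2
            - 2 * k
        = c ^ 2 * (∑ j ∈ univ.erase i, (if x j < x i then (1:ℝ) else -1)) ^ 2
          - 4 * c * k * (x i * (∑ j ∈ univ.erase i, (if x j < x i then (1:ℝ) else -1)))
          + 4 * k ^ 2 * (x i) ^ 2 - 2 * k := fun i => by ring
    rw [Finset.sum_congr rfl (fun i _ => expand i), Finset.sum_sub_distrib,
      Finset.sum_add_distrib, Finset.sum_sub_distrib, ← Finset.mul_sum, ← Finset.mul_sum,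
      ← Finset.mul_sum, Finset.sum_const, Finset.card_univ, Fintype.card_fin,
      nsmul_eq_mul, sum_sign_sq x hx, sum_sign_mul x hx]
  rw [hsum, hk]
  field_simp
  ring
end
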